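/- arXiv:2312.17644 — 5 statements merged into one kernel-verified Lean document; each statement's English description precedes it below -/
import Mathlib

section
/- Let X₁ and X₂ be subshifts over countably infinite alphabets A₁ and A₂. If there exists an isometric conjugacy h : X₁ → X₂ (a bijection satisfying d(h(x),h(y)) = d(x,y) for the product metrics and h∘σ = σ∘h), then the associated OTW-subshifts X₁^OTW and X₂^OTW are conjugate, i.e., there exists a length-preserving homeomorphism H : X₁^OTW → X₂^OTW with H∘σ = σ∘H. -/
namespace SubshiftPaper

variable {A : Type*}

/-- The initial word of length `n` of a sequence. -/
def word (x : ℕ → A) (n : ℕ) : List A := List.ofFn (fun i : Fin n => x i)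

/-- Concatenation of a finite word with an infinite sequence. -/
def cat (α : List A) (x : ℕ → A) : ℕ → A := fun n =>
  if h : n < α.length then α.get ⟨n, h⟩ else x (n - α.length)

/-- The shift map on infinite sequences. -/
def shiftSeq (x : ℕ → A) : ℕ → A := fun n => x (n + 1)

/-- `X` is a subshift: the set of sequences avoiding a set `F` of forbidden nonempty
finite words. -/
def IsSubshift (X : Set (ℕ → A)) : Prop :=
  ∃ F : Set (List A), (∀ w ∈ F, w ≠ []) ∧
    X = {x : ℕ → A | ∀ n k : ℕ, word (fun i => x (n + i)) k ∉ F}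

/-- The language of `X`: all finite initial blocks of elements of `X` (and their
subblocks appear by shifting; for subshifts initial blocks suffice). -/
def language (X : Set (ℕ → A)) : Set (List A) :=
  {α | ∃ x ∈ X, word x α.length = α}

open Classical in
/-- The product metric `d(x,y) = 2^{-min{n : xₙ ≠ yₙ}}`. -/
noncomputable def prodDist (x y : ℕ → A) : ℝ :=
  if h : x = y then 0 else (2 : ℝ)⁻¹ ^ Nat.find (Function.ne_iff.mp h)

/-- The cylinder set `Z_α = {x ∈ X : x starts with α}`. -/
def cylinder (X : Set (ℕ → A)) (α : List A) : Set (ℕ → A) :=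
  {x ∈ X | word x α.length = α}

/-- The set `C(α,β) = {βx : βx ∈ X and αx ∈ X}`. -/
def Cab (X : Set (ℕ → A)) (α β : List A) : Set (ℕ → A) :=
  {y | ∃ x : ℕ → A, y = cat β x ∧ cat β x ∈ X ∧ cat α x ∈ X}

/-- The follower set `F_α = {x ∈ X : αx ∈ X}`. -/
def follower (X : Set (ℕ → A)) (α : List A) : Set (ℕ → A) :=
  {x ∈ X | cat α x ∈ X}

/-- The Boolean algebra `U` of subsets of `X` generated by the sets `C(α,β)`: the smallest
collection of subsets containing all `C(α,β)` and `X` and closed under finite unions, finite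
intersections and complements in `X`. -/
def BA (X : Set (ℕ → A)) : Set (Set (ℕ → A)) :=
  ⋂₀ {C : Set (Set (ℕ → A)) | X ∈ C ∧
    (∀ α ∈ language X, ∀ β ∈ language X, Cab X α β ∈ C) ∧
    (∀ S ∈ C, ∀ T ∈ C, S ∪ T ∈ C) ∧
    (∀ S ∈ C, ∀ T ∈ C, S ∩ T ∈ C) ∧
    (∀ S ∈ C, X \ S ∈ C)}

/-- The periodic sequence `γ^∞ = γγγ⋯`. -/
def per (γ : List A) (h : γ ≠ []) : ℕ → A :=
  fun n => γ.get ⟨n % γ.length, Nat.mod_lt n (List.length_pos_iff.mpr h)⟩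

/-- A point is eventually periodic if it has the form `αγ^∞`. -/
def EventuallyPeriodic (x : ℕ → A) : Prop :=
  ∃ (α γ : List A) (h : γ ≠ []), x = cat α (per γ h)

/-- Condition (L): for every finite `P ⊆ L_X` and every nonempty `γ ∈ L_X` with
`γ^∞ ∈ F_P := ⋂_{α ∈ P} F_α`, the set `F_P` contains an element other than `γ^∞`. -/
def ConditionL (X : Set (ℕ → A)) : Prop :=
  ∀ P : Finset (List A), ↑P ⊆ language X →
    ∀ γ ∈ language X, ∀ h : γ ≠ [],
      per γ h ∈ X ∩ ⋂ α ∈ P, follower X α →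
        ∃ z ∈ X ∩ ⋂ α ∈ P, follower X α, z ≠ per γ h


/-- The finite word `α` viewed as the element `α∞∞∞⋯` of `Σ_A`. -/
def finSeq (α : List A) : ℕ → Option A := fun n =>
  if h : n < α.length then some (α.get ⟨n, h⟩) else none

/-- An infinite sequence viewed as an element of `Σ_A`. -/
def infSeq (x : ℕ → A) : ℕ → Option A := fun n => some (x n)

/-- The OTW-subshift `X^OTW = X^inf ∪ X^fin` associated with a subshift `X`: `X^fin` is the
set of finite words `α` admitting infinitely many letters `a` with `αay ∈ X` for some `y`. -/
def otw (X : Set (ℕ → A)) : Set (ℕ → Option A) :=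
  (infSeq '' X) ∪
    {z | ∃ α : List A, z = finSeq α ∧
      {a : A | ∃ y : ℕ → A, cat (α ++ [a]) y ∈ X}.Infinite}

open Classical in
/-- The length of an element of `Σ_A`. -/
noncomputable def otwLength (z : ℕ → Option A) : ℕ∞ :=
  if h : ∃ n, z n = none then (Nat.find h : ℕ∞) else ⊤

/-- The shift map on `Σ_A` (it deletes the first symbol). -/
def shiftO (z : ℕ → Option A) : ℕ → Option A := fun n => z (n + 1)

/-- The generalized cylinder `Z(α, F)`. -/
def gencyl (α : List A) (F : Finset A) : Set (ℕ → Option A) :=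
  {z | (∀ i : Fin α.length, z i = some (α.get i)) ∧ ∀ a ∈ F, z α.length ≠ some a}

/-- The topology on `X^OTW` generated by the generalized cylinders `Z(α,F)`, `α ∈ L_X`,
`F ⊆ A` finite. -/
def otwTop (X : Set (ℕ → A)) : TopologicalSpace ↥(otw X) :=
  TopologicalSpace.generateFrom
    {S | ∃ α ∈ language X, ∃ F : Finset A, S = Subtype.val ⁻¹' gencyl α F}

/-- `H : X₁^OTW → X₂^OTW` is a conjugacy of OTW-subshifts: a homeomorphism (for the topologies
generated by the generalized cylinders) commuting with the shifts and preserving lengths. -/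
def IsOTWConjugacy {A₁ A₂ : Type*} (X₁ : Set (ℕ → A₁)) (X₂ : Set (ℕ → A₂))
    (H : ↥(otw X₁) ≃ ↥(otw X₂)) : Prop :=
  @Continuous _ _ (otwTop X₁) (otwTop X₂) H ∧
  @Continuous _ _ (otwTop X₂) (otwTop X₁) H.symm ∧
  (∀ z : ↥(otw X₁), otwLength (H z).1 = otwLength z.1) ∧
  (∀ z w : ↥(otw X₁), w.1 = shiftO z.1 → (H w).1 = shiftO (H z).1)

/-!
An isometry `h` of the product metrics is exactly a bijection preserving the relation "the first
`n` symbols agree", so it induces a length-preserving map `wordMap h` on languages, injective,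
compatible with prefixes and, since `h` commutes with the shifts, with deleting the first letter.
Appending a letter `a` to `α` appends a letter `b` to `wordMap h α`, injectively in `a`; hence
infinitely many extensions of `α` give infinitely many extensions of `wordMap h α`, and
`wordMap h` maps `X₁^fin` to `X₂^fin`. The conjugacy is `h` on `X₁` and `wordMap h` on `X₁^fin`:
it pulls the generalized cylinder `Z(wordMap h α, F)` back to `Z(α, F')`, where `F'` is the finite
set of letters `a` whose image letter `b` lies in `F`.
-/

section Words

@[simp] lemma length_word (x : ℕ → A) (n : ℕ) : (word x n).length = n := List.length_ofFn

lemma getElem?_word (x : ℕ → A) (n i : ℕ) :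
    (word x n)[i]? = if i < n then some (x i) else none := by
  simp only [word, List.getElem?_ofFn]
  split_ifs <;> rfl

lemma word_eq_word_iff {x y : ℕ → A} {n : ℕ} : word x n = word y n ↔ ∀ i < n, x i = y i := by
  refine ⟨fun hxy i hi => ?_, fun hxy => List.ext_getElem? fun i => ?_⟩
  · have hi' := congrArg (·[i]?) hxy
    simp only [getElem?_word, if_pos hi] at hi'
    exact Option.some_injective _ hi'
  · simp only [getElem?_word]
    split_ifs with hi
    · rw [hxy i hi]
    · rfl

lemma word_eq_word_iff_prodDist_le {x y : ℕ → A} (n : ℕ) :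
    word x n = word y n ↔ prodDist x y ≤ (2 : ℝ)⁻¹ ^ n := by
  classical
  rw [prodDist]
  split_ifs with hxy
  · simp [hxy, pow_nonneg]
  · rw [word_eq_word_iff, inv_pow, inv_pow, inv_le_inv₀ (by positivity) (by positivity),
      pow_le_pow_iff_right₀ one_lt_two, Nat.le_find_iff]
    simp only [ne_eq, not_not]

lemma take_word (x : ℕ → A) (n k : ℕ) : (word x n).take k = word x (min k n) := by
  refine List.ext_getElem? fun i => ?_
  simp only [List.getElem?_take, getElem?_word]
  split_ifs <;> first | rfl | omega

lemma drop_one_word (x : ℕ → A) (n : ℕ) : (word x n).drop 1 = word (shiftSeq x) (n - 1) := by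
  refine List.ext_getElem? fun i => ?_
  simp only [List.getElem?_drop, getElem?_word, shiftSeq]
  split_ifs <;> first | rfl | (congr 2; omega)

lemma word_cat (β : List A) (y : ℕ → A) : word (cat β y) β.length = β := by
  refine List.ext_getElem? fun i => ?_
  simp only [getElem?_word, cat]
  split_ifs with hi
  · simp [List.getElem?_eq_getElem hi]
  · simp [List.getElem?_eq_none (not_lt.mp hi)]

lemma cat_word (x : ℕ → A) (n : ℕ) : cat (word x n) (fun m => x (n + m)) = x := by
  funext i
  simp only [cat, length_word]
  split_ifs with hi
  · simp [word]
  · congr 1; omega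

end Words

section Language

variable {X : Set (ℕ → A)}

/-- `α` lies in `X^fin` iff this set is infinite. -/
def extensionLetters (X : Set (ℕ → A)) (α : List A) : Set A := {a | ∃ y, cat (α ++ [a]) y ∈ X}

lemma word_mem_language {x : ℕ → A} (hx : x ∈ X) (n : ℕ) : word x n ∈ language X :=
  ⟨x, hx, by rw [length_word]⟩

lemma mem_language_of_prefix {α β : List A} (hαβ : α <+: β) (hβ : β ∈ language X) :
    α ∈ language X := by
  obtain ⟨x, hx, hxβ⟩ := hβ
  refine ⟨x, hx, ?_⟩
  calc word x α.length = (word x β.length).take α.length := by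
        rw [take_word, min_eq_left hαβ.length_le]
    _ = α := by rw [hxβ, ← List.prefix_iff_eq_take.mp hαβ]

lemma append_singleton_mem_language {α : List A} {a : A} (ha : a ∈ extensionLetters X α) :
    α ++ [a] ∈ language X :=
  let ⟨_, hy⟩ := ha
  ⟨_, hy, word_cat _ _⟩

lemma mem_language_of_infinite {α : List A} (hinf : (extensionLetters X α).Infinite) :
    α ∈ language X :=
  let ⟨_, ha⟩ := hinf.nonempty
  mem_language_of_prefix (List.prefix_append _ _) (append_singleton_mem_language ha)

lemma IsSubshift.shiftSeq_mem (hX : IsSubshift X) {x : ℕ → A} (hx : x ∈ X) :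
    shiftSeq x ∈ X := by
  obtain ⟨F, -, rfl⟩ := hX
  intro n k
  simpa only [shiftSeq, Nat.add_right_comm n 1] using hx (n + 1) k

end Language

section WordMap

variable {A₁ A₂ : Type*} {X₁ : Set (ℕ → A₁)} {X₂ : Set (ℕ → A₂)} {h : ↥X₁ ≃ ↥X₂}

variable (h) in
def PreservesWords : Prop :=
  ∀ (x y : ↥X₁) (n : ℕ), word (h x).1 n = word (h y).1 n ↔ word x.1 n = word y.1 n

lemma preservesWords_of_prodDist_eq
    (hiso : ∀ x y : ↥X₁, prodDist (h x).1 (h y).1 = prodDist x.1 y.1) : PreservesWords h :=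
  fun x y n => by rw [word_eq_word_iff_prodDist_le, word_eq_word_iff_prodDist_le, hiso]

lemma PreservesWords.symm (hw : PreservesWords h) : PreservesWords h.symm := fun u v n => by
  simpa using (hw (h.symm u) (h.symm v) n).symm

variable (h) in
open Classical in
/-- `wordMap h (word x n) = word (h x) n`, which is well defined when `h` preserves initial
words; off the language it is junk. -/
noncomputable def wordMap (α : List A₁) : List A₂ :=
  if hα : α ∈ language X₁ then word (h ⟨hα.choose, hα.choose_spec.1⟩).1 α.length else []

lemma wordMap_word (hw : PreservesWords h) (x : ↥X₁) (n : ℕ) :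
    wordMap h (word x.1 n) = word (h x).1 n := by
  have hmem := word_mem_language x.2 n
  rw [wordMap, dif_pos hmem]
  simpa only [length_word] using (hw _ x n).2 (by simpa using hmem.choose_spec.2)

lemma length_wordMap {α : List A₁} (hα : α ∈ language X₁) :
    (wordMap h α).length = α.length := by
  rw [wordMap, dif_pos hα, length_word]

lemma wordMap_mem_language (hw : PreservesWords h) {α : List A₁} (hα : α ∈ language X₁) :
    wordMap h α ∈ language X₂ := by
  obtain ⟨x, hx, hxα⟩ := hα
  rw [← hxα, wordMap_word hw ⟨x, hx⟩]
  exact word_mem_language (h _).2 _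

lemma wordMap_symm_wordMap (hw : PreservesWords h) {α : List A₁} (hα : α ∈ language X₁) :
    wordMap h.symm (wordMap h α) = α := by
  obtain ⟨x, hx, hxα⟩ := hα
  rw [← hxα, wordMap_word hw ⟨x, hx⟩, wordMap_word hw.symm (h ⟨x, hx⟩), Equiv.symm_apply_apply]

lemma wordMap_injOn (hw : PreservesWords h) : Set.InjOn (wordMap h) (language X₁) :=
  fun α hα β hβ hαβ => by
    rw [← wordMap_symm_wordMap hw hα, hαβ, wordMap_symm_wordMap hw hβ]

lemma wordMap_take (hw : PreservesWords h) {α : List A₁} (hα : α ∈ language X₁) (k : ℕ) :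
    wordMap h (α.take k) = (wordMap h α).take k := by
  obtain ⟨x, hx, hxα⟩ := hα
  rw [← hxα, take_word, wordMap_word hw ⟨x, hx⟩, wordMap_word hw ⟨x, hx⟩, take_word]

lemma wordMap_drop_one (hX₁ : IsSubshift X₁) (hw : PreservesWords h)
    (hshift : ∀ x y : ↥X₁, y.1 = shiftSeq x.1 → (h y).1 = shiftSeq (h x).1)
    {α : List A₁} (hα : α ∈ language X₁) :
    wordMap h (α.drop 1) = (wordMap h α).drop 1 := by
  obtain ⟨x, hx, hxα⟩ := hα
  rw [← hxα, drop_one_word, wordMap_word hw ⟨shiftSeq x, hX₁.shiftSeq_mem hx⟩,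
    wordMap_word hw ⟨x, hx⟩, drop_one_word, hshift ⟨x, hx⟩ _ rfl]

lemma wordMap_prefix_wordMap_iff (hw : PreservesWords h) {α γ : List A₁}
    (hα : α ∈ language X₁) (hγ : γ ∈ language X₁) :
    wordMap h α <+: wordMap h γ ↔ α <+: γ := by
  rw [List.prefix_iff_eq_take, List.prefix_iff_eq_take, length_wordMap hα,
    ← wordMap_take hw hγ]
  exact (wordMap_injOn hw).eq_iff hα (mem_language_of_prefix (List.take_prefix _ _) hγ)

variable (h) in
noncomputable def nextLetter (α : List A₁) (a : A₁) : Option A₂ :=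
  (wordMap h (α ++ [a]))[α.length]?

lemma exists_wordMap_append_singleton (hw : PreservesWords h) {α : List A₁} {a : A₁}
    (hαa : α ++ [a] ∈ language X₁) :
    ∃ b, nextLetter h α a = some b ∧ wordMap h (α ++ [a]) = wordMap h α ++ [b] := by
  have htake : (wordMap h (α ++ [a])).take α.length = wordMap h α := by
    rw [← wordMap_take hw hαa, List.take_left]
  have hlen : (wordMap h (α ++ [a])).length = α.length + 1 := by simp [length_wordMap hαa]
  unfold nextLetter
  generalize wordMap h (α ++ [a]) = l at htake hlen ⊢
  have hlt : α.length < l.length := by omega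
  refine ⟨l[α.length], List.getElem?_eq_getElem hlt, ?_⟩
  conv_lhs => rw [← List.take_append_drop α.length l]
  rw [htake, List.drop_eq_getElem_cons hlt, List.drop_eq_nil_of_le (by omega)]

lemma nextLetter_injOn (hw : PreservesWords h) (α : List A₁) :
    Set.InjOn (nextLetter h α) {a | α ++ [a] ∈ language X₁} := by
  intro a ha a' ha' haa'
  obtain ⟨b, hb, hφ⟩ := exists_wordMap_append_singleton hw ha
  obtain ⟨b', hb', hφ'⟩ := exists_wordMap_append_singleton hw ha'
  obtain rfl : b = b' := Option.some_injective _ (hb.symm.trans (haa'.trans hb'))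
  simpa using wordMap_injOn hw ha ha' (hφ.trans hφ'.symm)

lemma exists_nextLetter_mem (hw : PreservesWords h) {α : List A₁} {a : A₁}
    (ha : a ∈ extensionLetters X₁ α) :
    ∃ b ∈ extensionLetters X₂ (wordMap h α), nextLetter h α a = some b := by
  obtain ⟨y, hy⟩ := ha
  set x : ↥X₁ := ⟨cat (α ++ [a]) y, hy⟩
  obtain ⟨b, hb, hφ⟩ := exists_wordMap_append_singleton hw (append_singleton_mem_language ⟨y, hy⟩)
  refine ⟨b, ⟨fun m => (h x).1 ((α ++ [a]).length + m), ?_⟩, hb⟩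
  have hword : wordMap h α ++ [b] = word (h x).1 (α ++ [a]).length := by
    rw [← hφ, ← wordMap_word hw x, word_cat]
  rw [hword, cat_word]
  exact (h x).2

lemma extensionLetters_wordMap_infinite (hw : PreservesWords h) {α : List A₁}
    (hinf : (extensionLetters X₁ α).Infinite) :
    (extensionLetters X₂ (wordMap h α)).Infinite := by
  have himg : nextLetter h α '' extensionLetters X₁ α ⊆
      some '' extensionLetters X₂ (wordMap h α) := by
    rintro - ⟨a, ha, rfl⟩
    obtain ⟨b, hb, hab⟩ := exists_nextLetter_mem hw ha
    exact ⟨b, hb, hab.symm⟩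
  have hinj := (nextLetter_injOn hw α).mono fun _ => append_singleton_mem_language
  exact ((hinf.image hinj).mono himg).of_image some

end WordMap

section Sequences

lemma finSeq_eq_getElem? (γ : List A) (n : ℕ) : finSeq γ n = γ[n]? := by
  by_cases hn : n < γ.length
  · simp [finSeq, hn]
  · simp [finSeq, hn]

lemma finSeq_injective : Function.Injective (finSeq (A := A)) := fun α β hαβ =>
  List.ext_getElem? fun n => by rw [← finSeq_eq_getElem?, ← finSeq_eq_getElem?, hαβ]

lemma infSeq_injective : Function.Injective (infSeq (A := A)) := fun _ _ hxy =>
  funext fun n => Option.some_injective _ (congrFun hxy n)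

lemma infSeq_ne_finSeq (x : ℕ → A) (γ : List A) : infSeq x ≠ finSeq γ := fun hxγ => by
  simpa [infSeq, finSeq_eq_getElem?] using congrFun hxγ γ.length

lemma shiftO_finSeq (γ : List A) : shiftO (finSeq γ) = finSeq (γ.drop 1) := by
  funext n
  simp only [shiftO, finSeq_eq_getElem?, List.getElem?_drop, Nat.add_comm]

lemma otwLength_congr {B : Type*} {z : ℕ → Option A} {w : ℕ → Option B} (hzw : ∀ n, z n = none ↔ w n = none) :
    otwLength z = otwLength w := by
  have hex : (∃ n, z n = none) ↔ ∃ n, w n = none := exists_congr hzw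
  unfold otwLength
  by_cases hz : ∃ n, z n = none
  · rw [dif_pos hz, dif_pos (hex.1 hz), Nat.find_congr' fun {n} => hzw n]
  · rw [dif_neg hz, dif_neg (mt hex.2 hz)]

/-- The first condition defining the generalized cylinder `gencyl α F`. -/
def StartsWith (z : ℕ → Option A) (α : List A) : Prop :=
  ∀ i : Fin α.length, z i = some (α.get i)

lemma startsWith_iff {z : ℕ → Option A} {α : List A} :
    StartsWith z α ↔ ∀ i < α.length, z i = α[i]? := by
  simp only [StartsWith, Fin.forall_iff, List.get_eq_getElem]
  exact forall₂_congr fun i hi => by rw [List.getElem?_eq_getElem hi]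

lemma startsWith_infSeq_iff {x : ℕ → A} {α : List A} :
    StartsWith (infSeq x) α ↔ word x α.length = α := by
  rw [startsWith_iff]
  constructor
  · intro hxα
    refine List.ext_getElem? fun i => ?_
    rw [getElem?_word]
    split_ifs with hi
    · exact hxα i hi
    · exact (List.getElem?_eq_none (not_lt.mp hi)).symm
  · intro hxα i hi
    rw [← hxα, getElem?_word, if_pos hi]
    rfl

lemma startsWith_finSeq_iff {γ α : List A} : StartsWith (finSeq γ) α ↔ α <+: γ := by
  rw [startsWith_iff, List.prefix_iff_getElem?]
  simp only [finSeq_eq_getElem?]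
  exact forall₂_congr fun i hi => by rw [List.getElem?_eq_getElem hi]

lemma startsWith_append_singleton_iff {z : ℕ → Option A} {α : List A} {a : A} :
    StartsWith z (α ++ [a]) ↔ StartsWith z α ∧ z α.length = some a := by
  rw [startsWith_iff, startsWith_iff, List.length_append, List.length_singleton,
    Nat.forall_lt_succ_right, List.getElem?_concat_length]
  refine and_congr_left' (forall₂_congr fun i hi => ?_)
  rw [List.getElem?_append_left hi]

lemma mem_language_of_startsWith {X : Set (ℕ → A)} {z : ℕ → Option A} {α : List A}
    (hz : z ∈ otw X) (hα : StartsWith z α) : α ∈ language X := by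
  rcases hz with ⟨x, hx, rfl⟩ | ⟨γ, rfl, hγ⟩
  · exact ⟨x, hx, startsWith_infSeq_iff.mp hα⟩
  · exact mem_language_of_prefix (startsWith_finSeq_iff.mp hα) (mem_language_of_infinite hγ)

end Sequences

section OTWMap

variable {A₁ A₂ : Type*} {X₁ : Set (ℕ → A₁)} {X₂ : Set (ℕ → A₂)} {h : ↥X₁ ≃ ↥X₂}

variable (h) in
open Classical in
noncomputable def otwMap (z : ℕ → Option A₁) : ℕ → Option A₂ :=
  if hx : ∃ x : ↥X₁, z = infSeq x.1 then infSeq (h hx.choose).1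
  else if hγ : ∃ γ, z = finSeq γ then finSeq (wordMap h hγ.choose)
  else fun _ => none

lemma otwMap_infSeq (x : ↥X₁) : otwMap h (infSeq x.1) = infSeq (h x).1 := by
  have hx : ∃ x' : ↥X₁, infSeq x.1 = infSeq x'.1 := ⟨x, rfl⟩
  rw [otwMap, dif_pos hx, Subtype.ext (infSeq_injective hx.choose_spec.symm)]

lemma otwMap_finSeq (γ : List A₁) : otwMap h (finSeq γ) = finSeq (wordMap h γ) := by
  have hx : ¬ ∃ x : ↥X₁, finSeq γ = infSeq x.1 := fun ⟨x, hx⟩ => infSeq_ne_finSeq x.1 γ hx.symm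
  have hγ : ∃ γ', finSeq γ = finSeq γ' := ⟨γ, rfl⟩
  rw [otwMap, dif_neg hx, dif_pos hγ, finSeq_injective hγ.choose_spec.symm]

lemma otwMap_mem (hw : PreservesWords h) {z : ℕ → Option A₁} (hz : z ∈ otw X₁) :
    otwMap h z ∈ otw X₂ := by
  rcases hz with ⟨x, hx, rfl⟩ | ⟨γ, rfl, hγ⟩
  · rw [otwMap_infSeq ⟨x, hx⟩]
    exact Or.inl ⟨_, (h _).2, rfl⟩
  · rw [otwMap_finSeq]
    exact Or.inr ⟨_, rfl, extensionLetters_wordMap_infinite hw hγ⟩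

lemma otwMap_symm_otwMap (hw : PreservesWords h) {z : ℕ → Option A₁} (hz : z ∈ otw X₁) :
    otwMap h.symm (otwMap h z) = z := by
  rcases hz with ⟨x, hx, rfl⟩ | ⟨γ, rfl, hγ⟩
  · rw [otwMap_infSeq ⟨x, hx⟩, otwMap_infSeq (h ⟨x, hx⟩), Equiv.symm_apply_apply]
  · rw [otwMap_finSeq, otwMap_finSeq, wordMap_symm_wordMap hw (mem_language_of_infinite hγ)]

lemma otwMap_eq_none_iff {z : ℕ → Option A₁} (hz : z ∈ otw X₁) (n : ℕ) :
    otwMap h z n = none ↔ z n = none := by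
  rcases hz with ⟨x, hx, rfl⟩ | ⟨γ, rfl, hγ⟩
  · simp [otwMap_infSeq ⟨x, hx⟩, infSeq]
  · simp [otwMap_finSeq, finSeq_eq_getElem?, length_wordMap (mem_language_of_infinite hγ)]

lemma otwMap_shiftO (hX₁ : IsSubshift X₁) (hw : PreservesWords h)
    (hshift : ∀ x y : ↥X₁, y.1 = shiftSeq x.1 → (h y).1 = shiftSeq (h x).1)
    {z : ℕ → Option A₁} (hz : z ∈ otw X₁) :
    otwMap h (shiftO z) = shiftO (otwMap h z) := by
  rcases hz with ⟨x, hx, rfl⟩ | ⟨γ, rfl, hγ⟩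
  · have hsx : shiftSeq x ∈ X₁ := hX₁.shiftSeq_mem hx
    rw [otwMap_infSeq ⟨x, hx⟩, show shiftO (infSeq x) = infSeq (shiftSeq x) from rfl,
      otwMap_infSeq ⟨_, hsx⟩, hshift ⟨x, hx⟩ ⟨_, hsx⟩ rfl]
    rfl
  · rw [shiftO_finSeq, otwMap_finSeq, otwMap_finSeq, shiftO_finSeq,
      wordMap_drop_one hX₁ hw hshift (mem_language_of_infinite hγ)]

lemma startsWith_otwMap_iff (hw : PreservesWords h) {z : ℕ → Option A₁} (hz : z ∈ otw X₁)
    {α : List A₁} (hα : α ∈ language X₁) :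
    StartsWith (otwMap h z) (wordMap h α) ↔ StartsWith z α := by
  rcases hz with ⟨x, hx, rfl⟩ | ⟨γ, rfl, hγ⟩
  · rw [otwMap_infSeq ⟨x, hx⟩, startsWith_infSeq_iff, startsWith_infSeq_iff,
      length_wordMap hα, ← wordMap_word hw ⟨x, hx⟩]
    exact (wordMap_injOn hw).eq_iff (word_mem_language hx _) hα
  · rw [otwMap_finSeq, startsWith_finSeq_iff, startsWith_finSeq_iff,
      wordMap_prefix_wordMap_iff hw hα (mem_language_of_infinite hγ)]

lemma otwMap_apply_length (hw : PreservesWords h) {z : ℕ → Option A₁} (hz : z ∈ otw X₁)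
    {α : List A₁} (hzα : StartsWith z α) :
    otwMap h z α.length = (z α.length).bind (nextLetter h α) := by
  rcases ha : z α.length with _ | a
  · exact (otwMap_eq_none_iff hz _).2 ha
  · have hzαa : StartsWith z (α ++ [a]) := startsWith_append_singleton_iff.2 ⟨hzα, ha⟩
    have hαa := mem_language_of_startsWith hz hzαa
    obtain ⟨b, hb, hφ⟩ := exists_wordMap_append_singleton hw hαa
    have hstart := (startsWith_otwMap_iff hw hz hαa).2 hzαa
    rw [hφ, startsWith_append_singleton_iff,
      length_wordMap (mem_language_of_startsWith hz hzα)] at hstart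
    rw [Option.bind_some, hb, hstart.2]

lemma exists_otwMap_preimage_gencyl (hw : PreservesWords h) {β : List A₂}
    (hβ : β ∈ language X₂) (F : Finset A₂) :
    ∃ α ∈ language X₁, ∃ F' : Finset A₁,
      ∀ z ∈ otw X₁, otwMap h z ∈ gencyl β F ↔ z ∈ gencyl α F' := by
  set α := wordMap h.symm β
  have hα : α ∈ language X₁ := wordMap_mem_language hw.symm hβ
  have hφα : wordMap h α = β := wordMap_symm_wordMap hw.symm hβ
  set S := {a | α ++ [a] ∈ language X₁ ∧ ∃ b ∈ F, nextLetter h α a = some b}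
  have hS : S.Finite := by
    refine Set.Finite.of_finite_image ((F.finite_toSet.image some).subset ?_)
      ((nextLetter_injOn hw α).mono fun _ => And.left)
    rintro - ⟨a, ⟨-, b, hb, hab⟩, rfl⟩
    exact ⟨b, hb, hab.symm⟩
  refine ⟨α, hα, hS.toFinset, fun z hz => ?_⟩
  rw [← hφα]
  show StartsWith _ _ ∧ _ ↔ StartsWith _ _ ∧ _
  rw [startsWith_otwMap_iff hw hz hα, length_wordMap hα]
  refine and_congr_right fun hzα => ?_
  rw [otwMap_apply_length hw hz hzα]
  rcases ha : z α.length with _ | a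
  · simp
  · have hαa := mem_language_of_startsWith hz (startsWith_append_singleton_iff.2 ⟨hzα, ha⟩)
    simp only [Option.bind_some, Set.Finite.mem_toFinset, ne_eq, Option.some.injEq]
    constructor
    · rintro hF a' ⟨-, b, hb, hab⟩ rfl
      exact hF b hb hab
    · intro hS b hb hab
      exact hS a ⟨hαa, b, hb, hab⟩ rfl

variable (h) in
noncomputable def otwEquiv (hw : PreservesWords h) : ↥(otw X₁) ≃ ↥(otw X₂) where
  toFun z := ⟨otwMap h z, otwMap_mem hw z.2⟩
  invFun w := ⟨otwMap h.symm w, otwMap_mem hw.symm w.2⟩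
  left_inv z := Subtype.ext (otwMap_symm_otwMap hw z.2)
  right_inv w := Subtype.ext (otwMap_symm_otwMap hw.symm w.2)

lemma otwEquiv_symm (hw : PreservesWords h) : (otwEquiv h hw).symm = otwEquiv h.symm hw.symm :=
  rfl

lemma continuous_otwEquiv (hw : PreservesWords h) :
    @Continuous _ _ (otwTop X₁) (otwTop X₂) (otwEquiv h hw) := by
  refine continuous_generateFrom_iff.2 ?_
  rintro - ⟨β, hβ, F, rfl⟩
  obtain ⟨α, hα, F', hpre⟩ := exists_otwMap_preimage_gencyl hw hβ F
  have hpre' : otwEquiv h hw ⁻¹' (Subtype.val ⁻¹' gencyl β F) = Subtype.val ⁻¹' gencyl α F' :=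
    Set.ext fun z => hpre z z.2
  rw [hpre']
  exact TopologicalSpace.isOpen_generateFrom_of_mem ⟨α, hα, F', rfl⟩

end OTWMap

theorem stmt0_general {A₁ A₂ : Type*}
    (X₁ : Set (ℕ → A₁)) (X₂ : Set (ℕ → A₂)) (hX₁ : IsSubshift X₁)
    (h : ↥X₁ ≃ ↥X₂)
    (hiso : ∀ x y : ↥X₁, prodDist (h x).1 (h y).1 = prodDist x.1 y.1)
    (hshift : ∀ x y : ↥X₁, y.1 = shiftSeq x.1 → (h y).1 = shiftSeq (h x).1) :
    ∃ H : ↥(otw X₁) ≃ ↥(otw X₂), IsOTWConjugacy X₁ X₂ H := by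
  have hw : PreservesWords h := preservesWords_of_prodDist_eq hiso
  refine ⟨otwEquiv h hw, continuous_otwEquiv hw, ?_, fun z => ?_, fun z w hzw => ?_⟩
  · rw [otwEquiv_symm]
    exact continuous_otwEquiv hw.symm
  · exact otwLength_congr (otwMap_eq_none_iff z.2)
  · change otwMap h w.1 = shiftO (otwMap h z.1)
    rw [hzw, otwMap_shiftO hX₁ hw hshift z.2]

/-- if two subshifts over countably infinite alphabets are isometrically
conjugate for the product metrics, then the associated OTW-subshifts are conjugate. -/
theorem stmt0 {A₁ A₂ : Type*} [Countable A₁] [Infinite A₁] [Countable A₂] [Infinite A₂]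
    (X₁ : Set (ℕ → A₁)) (X₂ : Set (ℕ → A₂)) (hX₁ : IsSubshift X₁) (hX₂ : IsSubshift X₂)
    (h : ↥X₁ ≃ ↥X₂)
    (hiso : ∀ x y : ↥X₁, prodDist (h x).1 (h y).1 = prodDist x.1 y.1)
    (hshift : ∀ x y : ↥X₁, y.1 = shiftSeq x.1 → (h y).1 = shiftSeq (h x).1) :
    ∃ H : ↥(otw X₁) ≃ ↥(otw X₂), IsOTWConjugacy X₁ X₂ H :=
  stmt0_general X₁ X₂ hX₁ h hiso hshift

end SubshiftPaper
end

section
/- Let A be a C*-algebra over ℂ and let B ⊆ A be a *-subalgebra that is commutative and is generated, as a ℂ-algebra, by a set of projections of A (self-adjoint idempotents). Then for every complex Hilbert space H and every *-homomorphism π : B → B(H) (a ℂ-linear, multiplicative, star-preserving map into the bounded operators on H), one has ‖π(b)‖ ≤ ‖b‖ for all b ∈ B; that is, every representation of B is continuous with respect to the norm induced from A. -/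
open Submodule

/-!
Every element of `B` is a linear combination of star projections of `B`. Because `B` is
commutative, finitely many star projections can be refined to a finite family of pairwise
orthogonal ones: split each member `e` of the family by the next projection `q` into `e * q` and
`e - e * q`, and add `q - (∑ e) * q`. So `b = ∑ c e • e` with orthogonal `e`, and `b * e = c e • e`
gives `‖c e‖ ≤ ‖b‖` whenever `e ≠ 0`. The `π e` are again orthogonal star projections, hence
`star (π b) * π b = ∑ ‖c e‖ ^ 2 • π e ≤ ‖b‖ ^ 2 • ∑ π e` in the C⋆-algebra of operators on `H`,
and `‖π b‖ ≤ ‖b‖` follows from the C⋆-identity and `‖∑ π e‖ ≤ 1`.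
-/

theorem mul_eq_zero_of_mul_eq_self {R : Type*} [NonUnitalCommSemiring R] {x y e e' : R}
    (hx : x * e = x) (hy : y * e' = y) (hee' : e * e' = 0) : x * y = 0 := by
  rw [← hx, ← hy, mul_mul_mul_comm, hee', mul_zero]

structure OrthogonalStarProjections {R ι : Type*} [Mul R] [Star R] [Zero R] (t : Finset ι)
    (f : ι → R) : Prop where
  isStarProjection : ∀ i ∈ t, IsStarProjection (f i)
  mul_eq_zero : (t : Set ι).Pairwise fun i j => f i * f j = 0

namespace OrthogonalStarProjections

variable {R ι : Type*}

section Semiring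

variable [NonUnitalSemiring R] [StarRing R] {t : Finset ι} {f : ι → R}

theorem map {S F : Type*} [NonUnitalSemiring S] [StarRing S] [FunLike F R S]
    [NonUnitalRingHomClass F R S] [StarHomClass F R S] (h : OrthogonalStarProjections t f)
    (φ : F) : OrthogonalStarProjections t (φ ∘ f) where
  isStarProjection i hi := (h.isStarProjection i hi).map φ
  mul_eq_zero i hi j hj hij := by simp [← map_mul, h.mul_eq_zero hi hj hij]

theorem sum_smul_mul {k : Type*} [Semiring k] [Module k R] [IsScalarTower k R R]
    (h : OrthogonalStarProjections t f) (c : ι → k) {j : ι} (hj : j ∈ t) :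
    (∑ i ∈ t, c i • f i) * f j = c j • f j := by
  rw [Finset.sum_mul, Finset.sum_eq_single j, smul_mul_assoc,
    (h.isStarProjection j hj).isIdempotentElem.eq]
  · intro i hi hij
    rw [smul_mul_assoc, h.mul_eq_zero hi hj hij, smul_zero]
  · exact fun hj' => absurd hj hj'

theorem sum_mul (h : OrthogonalStarProjections t f) {j : ι} (hj : j ∈ t) :
    (∑ i ∈ t, f i) * f j = f j := by
  simpa using h.sum_smul_mul (fun _ => (1 : ℕ)) hj

theorem isStarProjection_sum (h : OrthogonalStarProjections t f) :
    IsStarProjection (∑ i ∈ t, f i) where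
  isSelfAdjoint := isSelfAdjoint_sum t fun i hi => (h.isStarProjection i hi).isSelfAdjoint
  isIdempotentElem := by
    rw [IsIdempotentElem, Finset.mul_sum]
    exact Finset.sum_congr rfl fun j hj => h.sum_mul hj

theorem star_mul_self_sum_smul {k : Type*} [CommSemiring k] [StarRing k] [Module k R]
    [StarModule k R] [IsScalarTower k R R] [SMulCommClass k R R]
    (h : OrthogonalStarProjections t f) (c : ι → k) :
    star (∑ i ∈ t, c i • f i) * ∑ i ∈ t, c i • f i = ∑ i ∈ t, (star (c i) * c i) • f i := by
  have hstar : star (∑ i ∈ t, c i • f i) = ∑ i ∈ t, star (c i) • f i := by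
    rw [star_sum]
    exact Finset.sum_congr rfl fun i hi => by
      rw [star_smul, (h.isStarProjection i hi).isSelfAdjoint.star_eq]
  rw [hstar, Finset.mul_sum]
  refine Finset.sum_congr rfl fun j hj => ?_
  rw [mul_smul_comm, h.sum_smul_mul _ hj, smul_smul, mul_comm]

end Semiring

section CommRing

variable [NonUnitalCommRing R] [StarRing R] {t : Finset R}

theorem insert_of_mul_eq_zero [DecidableEq R] (h : OrthogonalStarProjections t id) {p : R}
    (hp : IsStarProjection p) (hpt : ∀ e ∈ t, p * e = 0) :
    OrthogonalStarProjections (insert p t) id where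
  isStarProjection := Finset.forall_mem_insert _ _ _ |>.2 ⟨hp, h.isStarProjection⟩
  mul_eq_zero := by
    rw [Finset.coe_insert]
    exact h.mul_eq_zero.insert fun e he _ => ⟨hpt e he, by rw [id, id, mul_comm, hpt e he]⟩

theorem image_mul_union_image_sub_mul [DecidableEq R] (h : OrthogonalStarProjections t id)
    {q : R} (hq : IsStarProjection q) :
    OrthogonalStarProjections (t.image (· * q) ∪ t.image fun e => e - e * q) id := by
  have hmul_le (e : R) (he : IsStarProjection e) : e * q * e = e * q := by
    rw [mul_right_comm, he.isIdempotentElem.eq]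
  have hsub_le (e : R) (he : IsStarProjection e) : (e - e * q) * e = e - e * q := by
    rw [sub_mul, hmul_le e he, he.isIdempotentElem.eq]
  have hq_sub (e : R) : q * (e - e * q) = 0 := by
    rw [mul_sub, mul_left_comm, hq.isIdempotentElem.eq, mul_comm, sub_self]
  refine ⟨?_, ?_⟩
  · simp only [Finset.mem_union, Finset.mem_image]
    rintro _ (⟨e, he, rfl⟩ | ⟨e, he, rfl⟩)
    · exact (h.isStarProjection e he).mul hq (Commute.all _ _)
    · exact ((h.isStarProjection e he).mul hq (Commute.all _ _)).sub_of_mul_eq_left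
        (h.isStarProjection e he) (hmul_le e (h.isStarProjection e he))
  · simp only [Finset.coe_union, Finset.coe_image, Set.pairwise_union, id]
    refine ⟨?_, ?_, ?_⟩
    · rintro _ ⟨e, he, rfl⟩ _ ⟨e', he', rfl⟩ hne
      exact mul_eq_zero_of_mul_eq_self (hmul_le e (h.isStarProjection e he))
        (hmul_le e' (h.isStarProjection e' he'))
        (h.mul_eq_zero he he' fun hee => hne (hee ▸ rfl))
    · rintro _ ⟨e, he, rfl⟩ _ ⟨e', he', rfl⟩ hne
      exact mul_eq_zero_of_mul_eq_self (hsub_le e (h.isStarProjection e he))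
        (hsub_le e' (h.isStarProjection e' he'))
        (h.mul_eq_zero he he' fun hee => hne (hee ▸ rfl))
    · rintro _ ⟨e, he, rfl⟩ _ ⟨e', he', rfl⟩ -
      have : e * q * (e' - e' * q) = 0 := by
        rw [mul_assoc, hq_sub, mul_zero]
      exact ⟨this, by rw [mul_comm, this]⟩

theorem exists_insert_subset_span {k : Type*} [Semiring k] [Module k R]
    (h : OrthogonalStarProjections t id) {q : R} (hq : IsStarProjection q) :
    ∃ t' : Finset R, OrthogonalStarProjections t' id ∧
      insert q (t : Set R) ⊆ (span k (t' : Set R) : Set R) := by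
  classical
  set E := ∑ e ∈ t, e
  have hE : IsStarProjection E := h.isStarProjection_sum
  set p := q - E * q
  have hpq : p * q = p := by
    rw [sub_mul, mul_assoc, hq.isIdempotentElem.eq]
  have hp : IsStarProjection p := (hE.mul hq (Commute.all _ _)).sub_of_mul_eq_left hq <| by
    rw [mul_assoc, hq.isIdempotentElem.eq]
  have hEe : ∀ e ∈ t, E * e = e := fun e he => h.sum_mul he
  have hpt : ∀ e ∈ t, p * e = 0 := fun e he => by
    rw [sub_mul, mul_right_comm, hEe e he, mul_comm, sub_self]
  set t' := (insert p t).image (· * q) ∪ (insert p t).image fun e => e - e * q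
  have hmul {x : R} (hx : x ∈ insert p t) : x * q ∈ span k (t' : Set R) :=
    subset_span (Finset.mem_union_left _ (Finset.mem_image_of_mem (· * q) hx))
  have hsub {x : R} (hx : x ∈ insert p t) : x - x * q ∈ span k (t' : Set R) :=
    subset_span (Finset.mem_union_right _ (Finset.mem_image_of_mem (fun e => e - e * q) hx))
  refine ⟨t', (h.insert_of_mul_eq_zero hp hpt).image_mul_union_image_sub_mul hq,
    Set.insert_subset_iff.2 ⟨?_, ?_⟩⟩
  · have hq_eq : q = p * q + ∑ e ∈ t, e * q := by
      rw [hpq, ← Finset.sum_mul, sub_add_cancel]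
    rw [hq_eq]
    exact add_mem (hmul (Finset.mem_insert_self p t))
      (sum_mem fun e he => hmul (Finset.mem_insert_of_mem he))
  · intro e he
    rw [SetLike.mem_coe, ← add_sub_cancel (e * q) e]
    exact add_mem (hmul (Finset.mem_insert_of_mem he)) (hsub (Finset.mem_insert_of_mem he))

theorem exists_subset_span {k : Type*} [Semiring k] [Module k R] (s : Finset R)
    (hs : ∀ p ∈ s, IsStarProjection p) :
    ∃ t : Finset R, OrthogonalStarProjections t id ∧ (s : Set R) ⊆ span k (t : Set R) := by
  classical
  induction s using Finset.induction_on with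
  | empty => exact ⟨∅, ⟨by simp, by simp⟩, by simp⟩
  | insert q s _ ih =>
    rw [Finset.forall_mem_insert] at hs
    obtain ⟨t, ht, hst⟩ := ih hs.2
    obtain ⟨t', ht', hqt⟩ := ht.exists_insert_subset_span (k := k) hs.1
    refine ⟨t', ht', ?_⟩
    rw [Finset.coe_insert]
    exact Set.insert_subset_iff.2 ⟨hqt (Set.mem_insert q _),
      hst.trans (span_le.2 fun e he => hqt (Set.mem_insert_of_mem q he))⟩

theorem exists_sum_smul_eq {k : Type*} [Semiring k] [Module k R] {x : R}
    (hx : x ∈ span k {p : R | IsStarProjection p}) :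
    ∃ t : Finset R, OrthogonalStarProjections t id ∧ ∃ c : R → k, ∑ e ∈ t, c e • e = x := by
  obtain ⟨s, hs, hxs⟩ := mem_span_finite_of_mem_span hx
  obtain ⟨t, ht, hst⟩ := exists_subset_span (k := k) s hs
  obtain ⟨c, -, hc⟩ := mem_span_finset.1 (span_le.2 hst hxs)
  exact ⟨t, ht, c, hc⟩

end CommRing

section CStarAlgebra

open scoped ComplexOrder

variable [NonUnitalCStarAlgebra R] [PartialOrder R] [StarOrderedRing R] {t : Finset ι} {f : ι → R}

theorem norm_sum_smul_le (h : OrthogonalStarProjections t f) {c : ι → ℂ} {M : ℝ} (hM : 0 ≤ M)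
    (hc : ∀ i ∈ t, f i ≠ 0 → ‖c i‖ ≤ M) : ‖∑ i ∈ t, c i • f i‖ ≤ M := by
  set x := ∑ i ∈ t, c i • f i
  have hxx : star x * x = ∑ i ∈ t, ((‖c i‖ ^ 2 : ℝ) : ℂ) • f i := by
    rw [h.star_mul_self_sum_smul]
    simp only [Complex.star_def, Complex.conj_mul', Complex.ofReal_pow]
  have hle : star x * x ≤ ((M ^ 2 : ℝ) : ℂ) • ∑ i ∈ t, f i := by
    rw [← sub_nonneg, hxx, Finset.smul_sum, ← Finset.sum_sub_distrib]
    refine Finset.sum_nonneg fun i hi => ?_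
    rw [← sub_smul, ← Complex.ofReal_sub]
    by_cases hfi : f i = 0
    · rw [hfi, smul_zero]
    · have : ‖c i‖ ^ 2 ≤ M ^ 2 := pow_le_pow_left₀ (norm_nonneg _) (hc i hi hfi) 2
      exact smul_nonneg (Complex.zero_le_real.2 (sub_nonneg.2 this))
        (h.isStarProjection i hi).nonneg
  have hsq : ‖x‖ ^ 2 ≤ M ^ 2 := calc
    ‖x‖ ^ 2 = ‖star x * x‖ := by rw [CStarRing.norm_star_mul_self, sq]
    _ ≤ ‖((M ^ 2 : ℝ) : ℂ) • ∑ i ∈ t, f i‖ :=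
      CStarAlgebra.norm_le_norm_of_nonneg_of_le (star_mul_self_nonneg x) hle
    _ ≤ M ^ 2 := by
      rw [norm_smul, Complex.norm_real, Real.norm_of_nonneg (by positivity)]
      exact mul_le_of_le_one_right (by positivity) (h.isStarProjection_sum.norm_le _)
  exact (pow_le_pow_iff_left₀ (norm_nonneg x) hM two_ne_zero).1 hsq

end CStarAlgebra

end OrthogonalStarProjections

theorem norm_le_of_mul_eq_smul {𝕜 R : Type*} [NormedField 𝕜] [NonUnitalNormedRing R]
    [NormedSpace 𝕜 R] {x e : R} {c : 𝕜} (he : e ≠ 0) (h : x * e = c • e) : ‖c‖ ≤ ‖x‖ := by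
  refine le_of_mul_le_mul_right ?_ (norm_pos_iff.2 he)
  rw [← norm_smul, ← h]
  exact norm_mul_le x e

theorem NonUnitalStarAlgHom.norm_apply_le_of_mem_span_isStarProjection {R C : Type*}
    [NonUnitalNormedCommRing R] [StarRing R] [NormedSpace ℂ R] [IsScalarTower ℂ R R]
    [NonUnitalCStarAlgebra C] [PartialOrder C] [StarOrderedRing C] (φ : R →⋆ₙₐ[ℂ] C) {b : R}
    (hb : b ∈ span ℂ {p : R | IsStarProjection p}) : ‖φ b‖ ≤ ‖b‖ := by
  obtain ⟨t, ht, c, rfl⟩ := OrthogonalStarProjections.exists_sum_smul_eq hb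
  simp only [map_sum, map_smul]
  refine (ht.map φ).norm_sum_smul_le (norm_nonneg _) fun e he hφe => ?_
  exact norm_le_of_mul_eq_smul (e := e) (fun he0 => hφe (by simp [he0])) (ht.sum_smul_mul c he)

theorem NonUnitalStarSubalgebra.span_isStarProjection_eq_top {R A : Type*} [CommSemiring R]
    [NonUnitalSemiring A] [StarRing A] [Module R A] [IsScalarTower R A A]
    [SMulCommClass R A A] (B : NonUnitalStarSubalgebra R A)
    (hcomm : ∀ x ∈ B, ∀ y ∈ B, x * y = y * x) {S : Set A} (hS : ∀ p ∈ S, IsStarProjection p)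
    (hgen : B.toNonUnitalSubalgebra = NonUnitalAlgebra.adjoin R S) :
    span R {p : B | IsStarProjection p} = ⊤ := by
  have hSB : S ⊆ B := fun p hp => by
    change p ∈ B.toNonUnitalSubalgebra
    rw [hgen]
    exact NonUnitalAlgebra.subset_adjoin R hp
  have hclosure : ∀ q ∈ Subsemigroup.closure S, q ∈ B ∧ IsStarProjection q := by
    intro q hq
    induction hq using Subsemigroup.closure_induction with
    | mem p hp => exact ⟨hSB hp, hS p hp⟩
    | mul x y _ _ hx hy =>
      exact ⟨mul_mem hx.1 hy.1, hx.2.mul hy.2 (hcomm x hx.1 y hy.1)⟩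
  refine eq_top_iff.2 fun b _ => ?_
  have hb : (b : A) ∈ span R (Subsemigroup.closure S : Set A) := by
    rw [← NonUnitalAlgebra.adjoin_eq_span, ← hgen]
    exact b.2
  have hle : span R (Subsemigroup.closure S : Set A) ≤
      (span R {p : B | IsStarProjection p}).map (B.subtype : B →ₗ[R] A) := by
    rw [map_span]
    refine span_mono fun q hq => ⟨⟨q, (hclosure q hq).1⟩, ?_, rfl⟩
    exact ⟨Subtype.ext (hclosure q hq).2.isIdempotentElem,
      Subtype.ext (hclosure q hq).2.isSelfAdjoint⟩
  obtain ⟨y, hy, hyb⟩ := Submodule.mem_map.1 (hle hb)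
  rwa [← Subtype.ext hyb]

theorem stmt6_general {A : Type*} [NormedRing A] [StarRing A] [NormedAlgebra ℂ A]
    (B : NonUnitalStarSubalgebra ℂ A)
    (hcomm : ∀ x ∈ B, ∀ y ∈ B, x * y = y * x)
    (S : Set A) (hS : ∀ p ∈ S, IsSelfAdjoint p ∧ IsIdempotentElem p)
    (hgen : B.toNonUnitalSubalgebra = NonUnitalAlgebra.adjoin ℂ S)
    {H : Type*} [NormedAddCommGroup H] [InnerProductSpace ℂ H] [CompleteSpace H]
    (π : B → (H →L[ℂ] H))
    (hadd : ∀ x y : B, π (x + y) = π x + π y)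
    (hsmul : ∀ (c : ℂ) (x : B), π (c • x) = c • π x)
    (hmul : ∀ x y : B, π (x * y) = π x * π y)
    (hstar : ∀ x : B, π (star x) = star (π x)) :
    ∀ b : B, ‖π b‖ ≤ ‖b‖ := by
  have hspan :=
    B.span_isStarProjection_eq_top hcomm (fun p hp => ⟨(hS p hp).2, (hS p hp).1⟩) hgen
  let _ : NonUnitalNormedCommRing B :=
    { (inferInstance : NonUnitalNormedRing B) with
      mul_comm := fun x y => Subtype.ext (hcomm x x.2 y y.2) }
  let φ : B →⋆ₙₐ[ℂ] (H →L[ℂ] H) :=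
    { toFun := π
      map_add' := hadd
      map_smul' := hsmul
      map_zero' := by simpa using hsmul 0 0
      map_mul' := hmul
      map_star' := hstar }
  exact fun b => φ.norm_apply_le_of_mem_span_isStarProjection (hspan ▸ mem_top)

/-- if `B` is a commutative *-subalgebra of a C*-algebra `A` generated, as a
ℂ-algebra, by projections of `A`, then every representation of `B` on a Hilbert space is
contractive for the norm induced from `A`. -/
theorem stmt6 {A : Type*} [NormedRing A] [StarRing A] [CStarRing A] [NormedAlgebra ℂ A]
    [StarModule ℂ A] [CompleteSpace A]
    (B : NonUnitalStarSubalgebra ℂ A)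
    (hcomm : ∀ x ∈ B, ∀ y ∈ B, x * y = y * x)
    (S : Set A) (hS : ∀ p ∈ S, IsSelfAdjoint p ∧ IsIdempotentElem p)
    (hgen : B.toNonUnitalSubalgebra = NonUnitalAlgebra.adjoin ℂ S)
    {H : Type*} [NormedAddCommGroup H] [InnerProductSpace ℂ H] [CompleteSpace H]
    (π : B → (H →L[ℂ] H))
    (hadd : ∀ x y : B, π (x + y) = π x + π y)
    (hsmul : ∀ (c : ℂ) (x : B), π (c • x) = c • π x)
    (hmul : ∀ x y : B, π (x * y) = π x * π y)
    (hstar : ∀ x : B, π (star x) = star (π x)) :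
    ∀ b : B, ‖π b‖ ≤ ‖b‖ :=
  stmt6_general B hcomm S hS hgen π hadd hsmul hmul hstar
end

section
/- Let A = {a_n : n ∈ ℕ} ∪ {b_n : n ∈ ℕ} ∪ {c} be an alphabet of pairwise distinct symbols, and let X be the subshift over A with forbidden words {de : d, e ∈ A, e ≠ c} (i.e., X = {x ∈ A^ℕ : x_{n+1} = c for all n ∈ ℕ}). Then: (1) X = {a_n c^∞ : n ∈ ℕ} ∪ {b_n c^∞ : n ∈ ℕ} ∪ {c^∞}; (2) the Boolean algebra U consists exactly of the subsets S ⊆ X such that S is finite or X ∖ S is finite; (3) U_reg = {S ∈ U : S is finite and nonempty}. -/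
namespace SubshiftPaper

variable {A : Type*}

/-- The set of letters `a` with `Z_a ∩ S ≠ ∅`. -/
def letterSet (X : Set (ℕ → A)) (S : Set (ℕ → A)) : Set A :=
  {a | ({x ∈ X | x 0 = a} ∩ S).Nonempty}

/-- The regular sets: `U_reg = {S ∈ U : {a : Z_a ∩ S ≠ ∅} is finite and nonempty}`. -/
def Ureg (X : Set (ℕ → A)) : Set (Set (ℕ → A)) :=
  {S ∈ BA X | (letterSet X S).Finite ∧ (letterSet X S).Nonempty}

/-- The sequence `d c^∞ = d,c,c,c,…`. -/
def dc {A : Type*} (c d : A) : ℕ → A := fun n => if n = 0 then d else c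

/-! Every point of `X` is determined by its first letter: `x = x₀ c^∞`. Once a nonempty
word is prepended, the only tail that keeps the sequence in `X` is `c^∞`, so every `C(α,β)`
other than `C(ω,ω) = X` has at most one point, while `C(ω,d) = {d c^∞}` puts every singleton
into `U`. Hence `U` is the algebra of finite and cofinite subsets of `X`; and since `x ↦ x₀`
is injective on `X`, the letter set of `S ∈ U` is finite and nonempty exactly when `S` is. -/

section FiniteCofinite

variable {α : Type*} {X S T : Set α}

def finiteCofinite (X : Set α) : Set (Set α) :=
  {S | S ⊆ X ∧ (S.Finite ∨ (X \ S).Finite)}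

theorem self_mem_finiteCofinite : X ∈ finiteCofinite X :=
  ⟨subset_rfl, Or.inr (by simp)⟩

theorem mem_finiteCofinite_of_finite (hSX : S ⊆ X) (hS : S.Finite) : S ∈ finiteCofinite X :=
  ⟨hSX, Or.inl hS⟩

theorem union_mem_finiteCofinite (hS : S ∈ finiteCofinite X) (hT : T ∈ finiteCofinite X) :
    S ∪ T ∈ finiteCofinite X := by
  obtain ⟨hSX, hS | hS⟩ := hS
  · obtain ⟨hTX, hT | hT⟩ := hT
    · exact ⟨Set.union_subset hSX hTX, Or.inl (hS.union hT)⟩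
    · exact ⟨Set.union_subset hSX hTX,
        Or.inr (hT.subset (Set.sdiff_subset_sdiff_right Set.subset_union_right))⟩
  · exact ⟨Set.union_subset hSX hT.1,
      Or.inr (hS.subset (Set.sdiff_subset_sdiff_right Set.subset_union_left))⟩

theorem diff_mem_finiteCofinite (hS : S ∈ finiteCofinite X) : X \ S ∈ finiteCofinite X := by
  obtain ⟨hSX, hS | hS⟩ := hS
  · exact ⟨Set.sdiff_subset, Or.inr (by rwa [Set.sdiff_sdiff_cancel_left hSX])⟩
  · exact ⟨Set.sdiff_subset, Or.inl hS⟩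

theorem inter_mem_finiteCofinite (hS : S ∈ finiteCofinite X) (hT : T ∈ finiteCofinite X) :
    S ∩ T ∈ finiteCofinite X := by
  obtain ⟨hSX, hS | hS⟩ := hS
  · exact ⟨Set.inter_subset_left.trans hSX, Or.inl (hS.subset Set.inter_subset_left)⟩
  obtain ⟨-, hT | hT⟩ := hT
  · exact ⟨Set.inter_subset_left.trans hSX, Or.inl (hT.subset Set.inter_subset_right)⟩
  · refine ⟨Set.inter_subset_left.trans hSX, Or.inr ?_⟩
    rw [Set.sdiff_inter]
    exact hS.union hT

end FiniteCofinite

section BooleanAlgebra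

variable {X S T : Set (ℕ → A)}

theorem BA_subset {C : Set (Set (ℕ → A))} (hX : X ∈ C)
    (hCab : ∀ α ∈ language X, ∀ β ∈ language X, Cab X α β ∈ C)
    (hunion : ∀ S ∈ C, ∀ T ∈ C, S ∪ T ∈ C)
    (hinter : ∀ S ∈ C, ∀ T ∈ C, S ∩ T ∈ C)
    (hdiff : ∀ S ∈ C, X \ S ∈ C) : BA X ⊆ C :=
  fun _ hS => Set.mem_sInter.1 hS C ⟨hX, hCab, hunion, hinter, hdiff⟩

theorem self_mem_BA : X ∈ BA X :=
  Set.mem_sInter.2 fun _ hC => hC.1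

theorem Cab_mem_BA {α β : List A} (hα : α ∈ language X) (hβ : β ∈ language X) :
    Cab X α β ∈ BA X :=
  Set.mem_sInter.2 fun _ hC => hC.2.1 α hα β hβ

theorem union_mem_BA (hS : S ∈ BA X) (hT : T ∈ BA X) : S ∪ T ∈ BA X :=
  Set.mem_sInter.2 fun C hC =>
    hC.2.2.1 S (Set.mem_sInter.1 hS C hC) T (Set.mem_sInter.1 hT C hC)

theorem diff_mem_BA (hS : S ∈ BA X) : X \ S ∈ BA X :=
  Set.mem_sInter.2 fun C hC => hC.2.2.2.2 S (Set.mem_sInter.1 hS C hC)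

theorem subset_of_mem_BA (hS : S ∈ BA X) : S ⊆ X := by
  refine BA_subset (C := Set.powerset X) (Set.mem_powerset subset_rfl) ?_ ?_ ?_ ?_ hS
  · rintro α - β - _ ⟨x, rfl, hx, -⟩
    exact hx
  · exact fun S hS T hT => Set.union_subset hS hT
  · exact fun S hS T _ => Set.inter_subset_left.trans hS
  · exact fun S _ => Set.sdiff_subset

theorem mem_BA_of_finite (hsingleton : ∀ x ∈ X, {x} ∈ BA X) (hSX : S ⊆ X) (hS : S.Finite) :
    S ∈ BA X := by
  induction S, hS using Set.Finite.induction_on with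
  | empty => simpa using diff_mem_BA (self_mem_BA (X := X))
  | @insert x S _ _ ih =>
    rw [Set.insert_subset_iff] at hSX
    exact union_mem_BA (hsingleton x hSX.1) (ih hSX.2)

theorem BA_eq_finiteCofinite
    (hCab : ∀ α ∈ language X, ∀ β ∈ language X, Cab X α β ∈ finiteCofinite X)
    (hsingleton : ∀ x ∈ X, {x} ∈ BA X) : BA X = finiteCofinite X := by
  refine (BA_subset self_mem_finiteCofinite hCab
    (fun _ hS _ hT => union_mem_finiteCofinite hS hT)
    (fun _ hS _ hT => inter_mem_finiteCofinite hS hT)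
    fun _ hS => diff_mem_finiteCofinite hS).antisymm ?_
  rintro S ⟨hSX, hS | hS⟩
  · exact mem_BA_of_finite hsingleton hSX hS
  · rw [← Set.sdiff_sdiff_cancel_left hSX]
    exact diff_mem_BA (mem_BA_of_finite hsingleton Set.sdiff_subset hS)

theorem letterSet_eq_image (hSX : S ⊆ X) : letterSet X S = (fun x => x 0) '' S := by
  ext d
  constructor
  · rintro ⟨x, ⟨-, hx0⟩, hxS⟩
    exact ⟨x, hxS, hx0⟩
  · rintro ⟨x, hxS, hx0⟩
    exact ⟨x, ⟨hSX hxS, hx0⟩, hxS⟩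

theorem Ureg_eq_of_injOn (hinj : Set.InjOn (fun x => x 0) X) :
    Ureg X = {S | S ∈ BA X ∧ S.Finite ∧ S.Nonempty} := by
  ext S
  refine and_congr_right fun hS => ?_
  have hSX := subset_of_mem_BA hS
  rw [letterSet_eq_image hSX, Set.finite_image_iff (hinj.mono hSX), Set.image_nonempty]

end BooleanAlgebra

theorem cat_nil (x : ℕ → A) : cat [] x = x := by
  funext n
  simp [cat]

theorem Cab_nil_nil (X : Set (ℕ → A)) : Cab X [] [] = X := by
  ext y
  simp [Cab, cat_nil]

theorem nil_mem_language {X : Set (ℕ → A)} (hX : X.Nonempty) : [] ∈ language X :=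
  ⟨hX.some, hX.some_mem, by simp [word]⟩

theorem cat_singleton_const (c d : A) : cat [d] (fun _ => c) = dc c d := by
  funext n
  cases n <;> simp [cat, dc]

theorem dc_self (c : A) : dc c c = fun _ => c := by
  funext n
  simp [dc]

section ConstTail

variable (c : A)

def constTail : Set (ℕ → A) := {x | ∀ n, x (n + 1) = c}

variable {c}

theorem dc_mem_constTail (d : A) : dc c d ∈ constTail c := fun n => by simp [dc]

theorem eq_dc_of_mem_constTail {x : ℕ → A} (hx : x ∈ constTail c) : x = dc c (x 0) := by
  funext n
  cases n with
  | zero => rfl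
  | succ m => simp [dc, hx m]

theorem constTail_eq_range : constTail c = Set.range (dc c) := by
  ext x
  refine ⟨fun hx => ⟨x 0, (eq_dc_of_mem_constTail hx).symm⟩, ?_⟩
  rintro ⟨d, rfl⟩
  exact dc_mem_constTail d

theorem injOn_head_constTail : Set.InjOn (fun x => x 0) (constTail c) := fun x hx y hy hxy => by
  rw [eq_dc_of_mem_constTail hx, eq_dc_of_mem_constTail hy]
  exact congrArg (dc c) hxy

theorem eq_const_of_cat_mem_constTail {γ : List A} {x : ℕ → A} (hγ : γ ≠ [])
    (h : cat γ x ∈ constTail c) : x = fun _ => c := by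
  funext k
  have hlen : 0 < γ.length := List.length_pos_iff.mpr hγ
  have hk := h (γ.length - 1 + k)
  rwa [show γ.length - 1 + k + 1 = γ.length + k by omega, cat,
    dif_neg (by omega), Nat.add_sub_cancel_left] at hk

theorem singleton_mem_language_constTail (d : A) : [d] ∈ language (constTail c) :=
  ⟨dc c d, dc_mem_constTail d, by simp [word, dc]⟩

theorem Cab_nil_singleton_constTail (d : A) : Cab (constTail c) [] [d] = {dc c d} := by
  ext y
  constructor
  · rintro ⟨x, rfl, hx, -⟩
    rw [eq_const_of_cat_mem_constTail (List.cons_ne_nil d []) hx, cat_singleton_const]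
    rfl
  · rintro rfl
    refine ⟨fun _ => c, (cat_singleton_const c d).symm, ?_, ?_⟩
    · rw [cat_singleton_const]
      exact dc_mem_constTail d
    · rw [cat_nil, ← dc_self]
      exact dc_mem_constTail c

theorem singleton_mem_BA_constTail {x : ℕ → A} (hx : x ∈ constTail c) :
    {x} ∈ BA (constTail c) := by
  rw [eq_dc_of_mem_constTail hx, ← Cab_nil_singleton_constTail]
  exact Cab_mem_BA (nil_mem_language ⟨x, hx⟩) (singleton_mem_language_constTail _)

theorem Cab_mem_finiteCofinite_constTail (α β : List A) :
    Cab (constTail c) α β ∈ finiteCofinite (constTail c) := by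
  by_cases hnil : α = [] ∧ β = []
  · rw [hnil.1, hnil.2, Cab_nil_nil]
    exact self_mem_finiteCofinite
  refine mem_finiteCofinite_of_finite ?_ ((Set.finite_singleton (cat β fun _ => c)).subset ?_)
  · rintro _ ⟨x, rfl, hβ, -⟩
    exact hβ
  · rintro _ ⟨x, rfl, hβ, hα⟩
    by_cases hβnil : β = []
    · rw [eq_const_of_cat_mem_constTail (fun h => hnil ⟨h, hβnil⟩) hα]
      rfl
    · rw [eq_const_of_cat_mem_constTail hβnil hβ]
      rfl

theorem BA_constTail : BA (constTail c) = finiteCofinite (constTail c) :=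
  BA_eq_finiteCofinite (fun α _ β _ => Cab_mem_finiteCofinite_constTail α β)
    fun _ => singleton_mem_BA_constTail

end ConstTail

theorem stmt15_general {A : Type*} (a b : ℕ → A) (c : A)
    (hcover : ∀ d : A, (∃ n, d = a n) ∨ (∃ n, d = b n) ∨ d = c)
    (X : Set (ℕ → A)) (hXdef : X = {x : ℕ → A | ∀ n : ℕ, x (n + 1) = c}) :
    X = ({y | ∃ n, y = dc c (a n)} ∪ {y | ∃ n, y = dc c (b n)} ∪ {fun _ => c}) ∧
    BA X = {S | S ⊆ X ∧ (S.Finite ∨ (X \ S).Finite)} ∧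
    Ureg X = {S | S ∈ BA X ∧ S.Finite ∧ S.Nonempty} := by
  obtain rfl : X = constTail c := hXdef
  refine ⟨?_, BA_constTail, Ureg_eq_of_injOn injOn_head_constTail⟩
  rw [constTail_eq_range]
  ext x
  constructor
  · rintro ⟨d, rfl⟩
    rcases hcover d with ⟨n, rfl⟩ | ⟨n, rfl⟩ | rfl
    · exact Or.inl (Or.inl ⟨n, rfl⟩)
    · exact Or.inl (Or.inr ⟨n, rfl⟩)
    · exact Or.inr (dc_self d)
  · rintro ((⟨n, rfl⟩ | ⟨n, rfl⟩) | rfl)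
    exacts [⟨_, rfl⟩, ⟨_, rfl⟩, ⟨c, dc_self c⟩]

/-- for the subshift `X = {x : x_{n+1} = c ∀ n}` over the alphabet
`{a_n} ∪ {b_n} ∪ {c}`, one has (1) `X = {a_n c^∞} ∪ {b_n c^∞} ∪ {c^∞}`; (2) `U` consists
exactly of the finite and the cofinite subsets of `X`; (3) `U_reg` consists of the finite
nonempty elements of `U`. -/
theorem stmt15 {A : Type*} (a b : ℕ → A) (c : A)
    (ha : Function.Injective a) (hb : Function.Injective b)
    (hab : ∀ m n : ℕ, a m ≠ b n) (hac : ∀ n, a n ≠ c) (hbc : ∀ n, b n ≠ c)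
    (hcover : ∀ d : A, (∃ n, d = a n) ∨ (∃ n, d = b n) ∨ d = c)
    (X : Set (ℕ → A)) (hXdef : X = {x : ℕ → A | ∀ n : ℕ, x (n + 1) = c}) :
    X = ({y | ∃ n, y = dc c (a n)} ∪ {y | ∃ n, y = dc c (b n)} ∪ {fun _ => c}) ∧
    BA X = {S | S ⊆ X ∧ (S.Finite ∨ (X \ S).Finite)} ∧
    Ureg X = {S | S ∈ BA X ∧ S.Finite ∧ S.Nonempty} :=
  stmt15_general a b c hcover X hXdef

end SubshiftPaper
end

section
/- Let A = {a_n : n ∈ ℕ} ∪ {b_n : n ∈ ℕ} ∪ {c} be an alphabet of pairwise distinct symbols and let X = {a_n c^∞ : n ∈ ℕ} ∪ {b_n c^∞ : n ∈ ℕ} ∪ {c^∞} be the subshift with forbidden words {de : d, e ∈ A, e ≠ c}. Let V be the ℤ-module of finitely supported functions X → ℤ, let W be the ℤ-module of functions X → ℤ that are constant outside a finite subset of X, and define the ℤ-linear map T : V → W by T(f)(y) = f(y) − ∑_{x ∈ X, σ(x) = y} f(x) (the sum has finitely many nonzero terms since f is finitely supported). Then the kernel of T is the free ℤ-module ℤ·χ_{{c^∞}},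 hence isomorphic to ℤ, and the cokernel W / T(V) is isomorphic to ℤ². -/
namespace SubshiftPaper

variable {A : Type*}

/-- The ℤ-module `V` of finitely supported functions `X → ℤ`. -/
def Vmod (X : Set (ℕ → A)) : Submodule ℤ (↥X → ℤ) where
  carrier := {f | (Function.support f).Finite}
  zero_mem' := by simp [Function.support_zero]
  add_mem' := by
    intro f g hf hg
    exact (Set.Finite.union hf hg).subset (Function.support_add f g)
  smul_mem' := by
    intro m f hf
    apply hf.subset
    intro x hx
    simp only [Function.mem_support] at hx ⊢
    intro hfx
    exact hx (by simp [Pi.smul_apply, hfx])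

/-- The ℤ-module `W` of functions `X → ℤ` that are constant outside a finite set. -/
def Wmod (X : Set (ℕ → A)) : Submodule ℤ (↥X → ℤ) where
  carrier := {f | ∃ m : ℤ, {x | f x ≠ m}.Finite}
  zero_mem' := ⟨0, by simp⟩
  add_mem' := by
    rintro f g ⟨m, hm⟩ ⟨k, hk⟩
    refine ⟨m + k, (Set.Finite.union hm hk).subset ?_⟩
    intro x hx
    simp only [Set.mem_setOf_eq, Set.mem_union] at hx ⊢
    by_contra hcon
    push_neg at hcon
    exact hx (by simp [Pi.add_apply, hcon.1, hcon.2])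
  smul_mem' := by
    rintro m f ⟨k, hk⟩
    refine ⟨m * k, hk.subset ?_⟩
    intro x hx
    simp only [Set.mem_setOf_eq] at hx ⊢
    intro hfx
    exact hx (by simp [Pi.smul_apply, hfx, smul_eq_mul])

/-!
Every point of `X` is shifted onto `c^∞`, so `T f = f - (∑ f) • χ_{c^∞}`. Hence `T f = 0` forces
`f` to vanish off `c^∞`, and the range of `T` consists of the finitely supported functions of
total sum zero. Since `X` is infinite, a function in `W` has a well-defined eventual value `m`,
and `g ↦ (m, ∑ (g - m))` is a surjection `W → ℤ²` whose kernel is exactly that range.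
-/

open Classical

theorem eq_of_finite_setOf_ne {α β : Type*} [Infinite α] {g : α → β} {m m' : β}
    (h : {x | g x ≠ m}.Finite) (h' : {x | g x ≠ m'}.Finite) : m = m' := by
  obtain ⟨x, hx, hx'⟩ :=
    ((Filter.eventually_cofinite.2 h).and (Filter.eventually_cofinite.2 h')).exists
  exact hx.symm.trans hx'

theorem finite_setOf_val_eq {X : Set (ℕ → A)} (p : ℕ → A) : {x : X | x.1 = p}.Finite :=
  Set.Subsingleton.finite fun _ hx _ hy => Subtype.ext (hx.trans hy.symm)

theorem finsum_ite_val_eq {X : Set (ℕ → A)} {p : ℕ → A} (hp : p ∈ X) (m : ℤ) :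
    ∑ᶠ x : X, (if x.1 = p then m else 0) = m := by
  rw [finsum_eq_single _ ⟨p, hp⟩ fun x hx => if_neg fun h => hx (Subtype.ext h), if_pos rfl]

section EventualValue

variable {X : Set (ℕ → A)} [Infinite X]

/-- The constant value that a function in `W` takes outside a finite set. -/
noncomputable def eventualValue : Wmod X →ₗ[ℤ] ℤ where
  toFun g := g.2.choose
  map_add' g h := eq_of_finite_setOf_ne (g + h).2.choose_spec
    ((g.2.choose_spec.union h.2.choose_spec).subset
      fun x hx => not_and_or.1 fun ⟨hg, hh⟩ => hx (by simp [hg, hh]))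
  map_smul' r g := eq_of_finite_setOf_ne (r • g).2.choose_spec
    (g.2.choose_spec.subset fun x hx hg => hx (by simp [hg]))

theorem finite_setOf_ne_eventualValue (g : Wmod X) :
    {x | (g : X → ℤ) x ≠ eventualValue g}.Finite :=
  g.2.choose_spec

theorem eventualValue_eq {g : Wmod X} {m : ℤ} (h : {x | (g : X → ℤ) x ≠ m}.Finite) :
    eventualValue g = m :=
  eq_of_finite_setOf_ne (finite_setOf_ne_eventualValue g) h

theorem hasFiniteSupport_sub_eventualValue (g : Wmod X) :
    Function.HasFiniteSupport fun x => (g : X → ℤ) x - eventualValue g :=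
  (finite_setOf_ne_eventualValue g).subset fun _ hx => sub_ne_zero.1 hx

noncomputable def sumDeviation : Wmod X →ₗ[ℤ] ℤ where
  toFun g := ∑ᶠ x, ((g : X → ℤ) x - eventualValue g)
  map_add' g h := by
    rw [← finsum_add_distrib (hasFiniteSupport_sub_eventualValue g)
      (hasFiniteSupport_sub_eventualValue h)]
    refine finsum_congr fun x => ?_
    simp only [map_add, Submodule.coe_add, Pi.add_apply]
    ring
  map_smul' r g := by
    rw [RingHom.id_apply, smul_eq_mul, mul_finsum]
    refine finsum_congr fun x => ?_
    simp only [map_smul, Submodule.coe_smul, Pi.smul_apply, smul_eq_mul]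
    ring

theorem surjective_eventualValue_prod_sumDeviation {p : ℕ → A} (hp : p ∈ X) :
    Function.Surjective (eventualValue.prod sumDeviation : Wmod X →ₗ[ℤ] ℤ × ℤ) := by
  rintro ⟨m, k⟩
  have hfin : {x : X | m + (if x.1 = p then k else 0) ≠ m}.Finite :=
    (finite_setOf_val_eq p).subset fun x hx => by_contra fun h : x.1 ≠ p => hx (by simp [h])
  have hev : eventualValue (⟨_, ⟨m, hfin⟩⟩ : Wmod X) = m := eventualValue_eq hfin
  refine ⟨⟨_, ⟨m, hfin⟩⟩, Prod.ext hev ?_⟩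
  simp [sumDeviation, hev, finsum_ite_val_eq hp]

end EventualValue

section CollapsingShift

variable {X : Set (ℕ → A)} {p : ℕ → A}

theorem finsum_mem_shift_preimage (hshift : ∀ x ∈ X, shiftSeq x = p) (f : X → ℤ) (y : X) :
    ∑ᶠ x ∈ {x : X | shiftSeq x.1 = y.1}, f x = if y.1 = p then ∑ᶠ x, f x else 0 := by
  split_ifs with hy
  · have hfiber : {x : X | shiftSeq x.1 = y.1} = Set.univ :=
      Set.eq_univ_of_forall fun x => (hshift x x.2).trans hy.symm
    rw [hfiber, finsum_mem_univ]
  · have hfiber : {x : X | shiftSeq x.1 = y.1} = ∅ :=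
      Set.eq_empty_of_forall_notMem fun x hx => hy (hx.symm.trans (hshift x x.2))
    rw [hfiber, finsum_mem_empty]

theorem apply_eq_zero_iff {T : Vmod X →ₗ[ℤ] Wmod X}
    (hT : ∀ (f : Vmod X) (y : X),
      (T f : X → ℤ) y = (f : X → ℤ) y - if y.1 = p then ∑ᶠ x, (f : X → ℤ) x else 0)
    (f : Vmod X) :
    T f = 0 ↔ ∃ m : ℤ, ∀ x : X, (f : X → ℤ) x = if x.1 = p then m else 0 := by
  constructor
  · intro hf
    exact ⟨∑ᶠ x, (f : X → ℤ) x, fun x => sub_eq_zero.1 ((hT f x).symm.trans (by simp [hf]))⟩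
  · rintro ⟨m, hm⟩
    ext y
    rw [hT, hm]
    split_ifs with hy
    · simp [hm, finsum_ite_val_eq (hy ▸ y.2 : p ∈ X)]
    · simp

noncomputable def Vmod.single (X : Set (ℕ → A)) (p : ℕ → A) (m : ℤ) : Vmod X :=
  ⟨fun x => if x.1 = p then m else 0,
    (finite_setOf_val_eq p).subset (Function.support_subset_iff'.2 fun _ hx => if_neg hx)⟩

noncomputable def kerEquivInt {T : Vmod X →ₗ[ℤ] Wmod X}
    (hT : ∀ (f : Vmod X) (y : X),
      (T f : X → ℤ) y = (f : X → ℤ) y - if y.1 = p then ∑ᶠ x, (f : X → ℤ) x else 0)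
    (hp : p ∈ X) : LinearMap.ker T ≃ₗ[ℤ] ℤ where
  toFun f := (f.1 : X → ℤ) ⟨p, hp⟩
  invFun m := ⟨Vmod.single X p m, (apply_eq_zero_iff hT _).2 ⟨m, fun _ => rfl⟩⟩
  map_add' _ _ := rfl
  map_smul' _ _ := rfl
  left_inv f := by
    obtain ⟨m, hm⟩ := (apply_eq_zero_iff hT f.1).1 f.2
    ext x
    simp [Vmod.single, hm]
  right_inv _ := if_pos rfl

theorem range_eq_ker_eventualValue_prod_sumDeviation [Infinite X] {T : Vmod X →ₗ[ℤ] Wmod X}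
    (hT : ∀ (f : Vmod X) (y : X),
      (T f : X → ℤ) y = (f : X → ℤ) y - if y.1 = p then ∑ᶠ x, (f : X → ℤ) x else 0)
    (hp : p ∈ X) : LinearMap.range T = LinearMap.ker (eventualValue.prod sumDeviation) := by
  apply le_antisymm
  · rintro _ ⟨f, rfl⟩
    have hfin : (Function.support (f : X → ℤ)).Finite := f.2
    have hev : eventualValue (T f) = 0 := by
      refine eventualValue_eq ((hfin.union (finite_setOf_val_eq p)).subset fun y hy => ?_)
      by_cases hyp : y.1 = p
      · exact Or.inr hyp
      · exact Or.inl (by simpa [hT, hyp] using hy)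
    have hsum : sumDeviation (T f) = 0 := by
      simp only [sumDeviation, LinearMap.coe_mk, AddHom.coe_mk, hev, sub_zero, hT]
      rw [finsum_sub_distrib (g := fun x : X => if x.1 = p then ∑ᶠ x, (f : X → ℤ) x else 0) hfin
        (Vmod.single X p _).2, finsum_ite_val_eq hp, sub_self]
    simp [LinearMap.mem_ker, hev, hsum]
  · intro g hg
    have hev : eventualValue g = 0 := congrArg Prod.fst hg
    have hsum : sumDeviation g = 0 := congrArg Prod.snd hg
    have hfin : (Function.support (g : X → ℤ)).Finite := by
      have := finite_setOf_ne_eventualValue g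
      rwa [hev] at this
    have hsum' : ∑ᶠ x, (g : X → ℤ) x = 0 := by simpa [sumDeviation, hev] using hsum
    refine ⟨⟨g, hfin⟩, Subtype.ext (funext fun y => ?_)⟩
    simp [hT, hsum']

end CollapsingShift

theorem infinite_setOf_forall_succ_eq [Infinite A] (c : A) :
    Infinite {x : ℕ → A | ∀ n, x (n + 1) = c} :=
  Infinite.of_injective (fun d => ⟨dc c d, fun _ => by simp [dc]⟩) fun d e h => by
    simpa [dc] using congrFun (congrArg Subtype.val h) 0

open Classical in
theorem stmt16_general {A : Type*} (a : ℕ → A) (c : A)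
    (ha : Function.Injective a)
    (X : Set (ℕ → A)) (hXdef : X = {x : ℕ → A | ∀ n : ℕ, x (n + 1) = c})
    (T : Vmod X →ₗ[ℤ] Wmod X)
    (hT : ∀ (f : Vmod X) (y : ↥X),
      (T f : ↥X → ℤ) y =
        (f : ↥X → ℤ) y - ∑ᶠ x ∈ {x : ↥X | shiftSeq x.1 = y.1}, (f : ↥X → ℤ) x) :
    (∀ f : Vmod X, T f = 0 ↔
      ∃ m : ℤ, ∀ x : ↥X, (f : ↥X → ℤ) x = if x.1 = (fun _ => c) then m else 0) ∧
    Nonempty (LinearMap.ker T ≃ₗ[ℤ] ℤ) ∧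
    Nonempty ((↥(Wmod X) ⧸ LinearMap.range T) ≃ₗ[ℤ] (ℤ × ℤ)) := by
  subst hXdef
  have : Infinite A := Infinite.of_injective a ha
  have := infinite_setOf_forall_succ_eq c
  have hshift : ∀ x ∈ {x : ℕ → A | ∀ n, x (n + 1) = c}, shiftSeq x = fun _ => c :=
    fun _ hx => funext hx
  have hc : (fun _ => c) ∈ {x : ℕ → A | ∀ n, x (n + 1) = c} := fun _ => rfl
  have hT' := fun f y => (hT f y).trans (by rw [finsum_mem_shift_preimage hshift])
  exact ⟨apply_eq_zero_iff hT', ⟨kerEquivInt hT' hc⟩,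
    ⟨(Submodule.quotEquivOfEq _ _ (range_eq_ker_eventualValue_prod_sumDeviation hT' hc)).trans
      ((eventualValue.prod sumDeviation).quotKerEquivOfSurjective
        (surjective_eventualValue_prod_sumDeviation hc))⟩⟩

open Classical in
/-- for the subshift `X = {a_n c^∞} ∪ {b_n c^∞} ∪ {c^∞}` and the map
`T : V → W`, `T(f)(y) = f(y) − ∑_{σ(x) = y} f(x)`, the kernel of `T` is `ℤ·χ_{{c^∞}} ≅ ℤ`
and the cokernel `W / T(V)` is isomorphic to `ℤ²`. -/
theorem stmt16 {A : Type*} (a b : ℕ → A) (c : A)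
    (ha : Function.Injective a) (hb : Function.Injective b)
    (hab : ∀ m n : ℕ, a m ≠ b n) (hac : ∀ n, a n ≠ c) (hbc : ∀ n, b n ≠ c)
    (hcover : ∀ d : A, (∃ n, d = a n) ∨ (∃ n, d = b n) ∨ d = c)
    (X : Set (ℕ → A)) (hXdef : X = {x : ℕ → A | ∀ n : ℕ, x (n + 1) = c})
    (T : Vmod X →ₗ[ℤ] Wmod X)
    (hT : ∀ (f : Vmod X) (y : ↥X),
      (T f : ↥X → ℤ) y =
        (f : ↥X → ℤ) y - ∑ᶠ x ∈ {x : ↥X | shiftSeq x.1 = y.1}, (f : ↥X → ℤ) x) :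
    (∀ f : Vmod X, T f = 0 ↔
      ∃ m : ℤ, ∀ x : ↥X, (f : ↥X → ℤ) x = if x.1 = (fun _ => c) then m else 0) ∧
    Nonempty (LinearMap.ker T ≃ₗ[ℤ] ℤ) ∧
    Nonempty ((↥(Wmod X) ⧸ LinearMap.range T) ≃ₗ[ℤ] (ℤ × ℤ)) :=
  stmt16_general a c ha X hXdef T hT

end SubshiftPaper
end

section
/- Let X = {0^∞} ∪ {(0j)^∞ : j ≥ 1} ∪ {(j0)^∞ : j ≥ 1} be the subshift over the alphabet ℕ determined by the allowed 3-blocks P = {(0,j,0) : j ∈ ℕ} ∪ {(j,0,j) : j ∈ ℕ}, with shift σ. Write A₀ := {0^∞}, B_j := {(0j)^∞}, C_j := {(j0)^∞} (j ≥ 1), U' := {(0j)^∞ : j ≥ 1}, V' := {(j0)^∞ : j ≥ 1}. Let V be the ℤ-span of {χ_{A₀}} ∪ {χ_{B_j}, χ_{C_j} : j ≥ 1} ∪ {χ_{U'}} and W the ℤ-span of {χ_{A₀}} ∪ {χ_{B_j}, χ_{C_j} : j ≥ 1} ∪ {χ_{U'}, χ_{V'}} inside the functions X → ℤ, and define the ℤ-linear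 map T : V → W by T(f)(y) = f(y) − ∑_{x ∈ X, σ(x) = y} f(x) (each y ∈ X has only finitely many σ-preimages at which f is nonzero, so the sum is finite). Then the kernel of T is the ℤ-span of {χ_{A₀}} ∪ {χ_{B_j} + χ_{C_j} : j ≥ 1}, which is a free ℤ-module isomorphic to ⊕_{j∈ℕ} ℤ, and the cokernel W / T(V) is isomorphic to ⊕_{j∈ℕ} ℤ. -/
namespace SubshiftPaper

variable {A : Type*}

/-- The set `P` of allowed 3-blocks. -/
def allowedP : Set (ℕ × ℕ × ℕ) :=
  {p | ∃ j : ℕ, p = (0, j, 0)} ∪ {p | ∃ j : ℕ, p = (j, 0, j)}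

/-- The 2-step subshift over `ℕ` determined by the allowed 3-blocks `P`. -/
def Xtriple : Set (ℕ → ℕ) :=
  {x | ∀ n : ℕ, (x n, x (n + 1), x (n + 2)) ∈ allowedP}

/-- The periodic sequence `(0j)^∞ = 0,j,0,j,…`. -/
def alt0 (j : ℕ) : ℕ → ℕ := fun n => if n % 2 = 0 then 0 else j

/-- The periodic sequence `(j0)^∞ = j,0,j,0,…`. -/
def alt1 (j : ℕ) : ℕ → ℕ := fun n => if n % 2 = 0 then j else 0

open Classical in
/-- The indicator function `χ_S : X → ℤ` of a subset `S`. -/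
noncomputable def ind (X : Set (ℕ → A)) (S : Set (ℕ → A)) : ↥X → ℤ :=
  fun x => if x.1 ∈ S then 1 else 0

/-- The ℤ-span `V` of `{χ_{A₀}} ∪ {χ_{B_j}, χ_{C_j} : j ≥ 1} ∪ {χ_{U'}}`. -/
noncomputable def Vspan : Submodule ℤ (↥Xtriple → ℤ) :=
  Submodule.span ℤ
    ({ind Xtriple {fun _ => 0}, ind Xtriple {y | ∃ j, 1 ≤ j ∧ y = alt0 j}} ∪
      {f | ∃ j, 1 ≤ j ∧ f = ind Xtriple {alt0 j}} ∪
      {f | ∃ j, 1 ≤ j ∧ f = ind Xtriple {alt1 j}})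

/-- The ℤ-span `W` of `{χ_{A₀}} ∪ {χ_{B_j}, χ_{C_j} : j ≥ 1} ∪ {χ_{U'}, χ_{V'}}`. -/
noncomputable def Wspan : Submodule ℤ (↥Xtriple → ℤ) :=
  Submodule.span ℤ
    ({ind Xtriple {fun _ => 0}, ind Xtriple {y | ∃ j, 1 ≤ j ∧ y = alt0 j},
        ind Xtriple {y | ∃ j, 1 ≤ j ∧ y = alt1 j}} ∪
      {f | ∃ j, 1 ≤ j ∧ f = ind Xtriple {alt0 j}} ∪
      {f | ∃ j, 1 ≤ j ∧ f = ind Xtriple {alt1 j}})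

/-!
On `X` the shift is an involution exchanging `(0j)^∞` and `(j0)^∞`, so the σ-preimage of `y` is
`{σ y}` and `T f = f - f ∘ σ`. Hence `ker T` consists of the σ-invariant elements of `V`. Such an
element is finitely supported on the points `(j0)^∞`, so it is a finite combination of the orbit
indicators `χ_{A₀}`, `χ_{B_j} + χ_{C_j}`, which are linearly independent. In `W / T(V)` we have
`χ_{V'} ≡ χ_{U'}` and `χ_{C_j} ≡ χ_{B_j}`, so the classes of `χ_{U'}`, `χ_{A₀}`, `χ_{B_j}` span;
they are independent because every element of `T(V)` sums to zero over each σ-orbit.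
-/

section Shift

@[simp]
lemma alt0_inj {i j : ℕ} : alt0 i = alt0 j ↔ i = j :=
  ⟨fun h => by simpa [alt0] using congrFun h 1, fun h => h ▸ rfl⟩

@[simp]
lemma alt1_inj {i j : ℕ} : alt1 i = alt1 j ↔ i = j :=
  ⟨fun h => by simpa [alt1] using congrFun h 0, fun h => h ▸ rfl⟩

@[simp]
lemma alt0_eq_alt1_iff {i j : ℕ} : alt0 i = alt1 j ↔ i = 0 ∧ j = 0 := by
  refine ⟨fun h => ⟨?_, ?_⟩, ?_⟩
  · simpa [alt0, alt1] using congrFun h 1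
  · simpa [alt0, alt1] using (congrFun h 0).symm
  · rintro ⟨rfl, rfl⟩
    funext n
    simp [alt0, alt1]

@[simp]
lemma alt1_eq_alt0_iff {i j : ℕ} : alt1 i = alt0 j ↔ i = 0 ∧ j = 0 := by
  rw [eq_comm, alt0_eq_alt1_iff, and_comm]

lemma alt0_zero : alt0 0 = fun _ => 0 := by
  funext n
  simp [alt0]

@[simp]
lemma alt1_eq_zero_iff {j : ℕ} : (alt1 j = fun _ => 0) ↔ j = 0 := by
  simp [← alt0_zero]

lemma shiftSeq_alt0 (j : ℕ) : shiftSeq (alt0 j) = alt1 j := by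
  funext n
  simp only [shiftSeq, alt0, alt1]
  split_ifs <;> omega

lemma shiftSeq_alt1 (j : ℕ) : shiftSeq (alt1 j) = alt0 j := by
  funext n
  simp only [shiftSeq, alt0, alt1]
  split_ifs <;> omega

lemma shiftSeq_mem {x : ℕ → ℕ} (hx : x ∈ Xtriple) : shiftSeq x ∈ Xtriple :=
  fun n => hx (n + 1)

lemma alt0_mem (j : ℕ) : alt0 j ∈ Xtriple := by
  intro n
  rcases Nat.mod_two_eq_zero_or_one n with h | h
  · exact Or.inl ⟨j, by simp [alt0, h, Nat.add_mod]⟩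
  · exact Or.inr ⟨j, by simp [alt0, h, Nat.add_mod]⟩

lemma alt1_mem (j : ℕ) : alt1 j ∈ Xtriple :=
  shiftSeq_alt0 j ▸ shiftSeq_mem (alt0_mem j)

lemma apply_add_two_of_mem {x : ℕ → ℕ} (hx : x ∈ Xtriple) (n : ℕ) : x (n + 2) = x n := by
  rcases hx n with ⟨j, h⟩ | ⟨j, h⟩ <;> simp only [Prod.mk.injEq] at h <;> omega

lemma shiftSeq_shiftSeq {x : ℕ → ℕ} (hx : x ∈ Xtriple) : shiftSeq (shiftSeq x) = x :=
  funext (apply_add_two_of_mem hx)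

lemma eq_alt0_or_eq_alt1 {x : ℕ → ℕ} (hx : x ∈ Xtriple) : x = alt0 (x 1) ∨ x = alt1 (x 0) := by
  have hparity : ∀ n, x n = if n % 2 = 0 then x 0 else x 1 := by
    intro n
    induction n using Nat.strong_induction_on with
    | _ n ih =>
      match n with
      | 0 => simp
      | 1 => simp
      | k + 2 => rw [apply_add_two_of_mem hx, ih k (by omega), Nat.add_mod_right]
  have hzero : x 0 = 0 ∨ x 1 = 0 := by
    rcases hx 0 with ⟨j, h⟩ | ⟨j, h⟩ <;> simp only [Nat.zero_add, Prod.mk.injEq] at h <;> omega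
  rcases hzero with h | h
  · exact Or.inl (funext fun n => by rw [hparity n, h]; rfl)
  · exact Or.inr (funext fun n => by rw [hparity n, h]; rfl)

def alt0Pt (j : ℕ) : ↥Xtriple := ⟨alt0 j, alt0_mem j⟩

def alt1Pt (j : ℕ) : ↥Xtriple := ⟨alt1 j, alt1_mem j⟩

lemma exists_eq_alt0Pt_or_eq_alt1Pt (y : ↥Xtriple) : ∃ j, y = alt0Pt j ∨ y = alt1Pt j := by
  rcases eq_alt0_or_eq_alt1 y.2 with h | h
  · exact ⟨_, Or.inl (Subtype.ext h)⟩
  · exact ⟨_, Or.inr (Subtype.ext h)⟩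

def shiftX (y : ↥Xtriple) : ↥Xtriple := ⟨shiftSeq y.1, shiftSeq_mem y.2⟩

lemma shiftX_alt1Pt (j : ℕ) : shiftX (alt1Pt j) = alt0Pt j := Subtype.ext (shiftSeq_alt1 j)

lemma shiftSeq_eq_iff {x y : ℕ → ℕ} (hx : x ∈ Xtriple) (hy : y ∈ Xtriple) :
    shiftSeq x = y ↔ x = shiftSeq y := by
  constructor
  · rintro rfl
    exact (shiftSeq_shiftSeq hx).symm
  · rintro rfl
    exact shiftSeq_shiftSeq hy

lemma preimage_shiftSeq (y : ↥Xtriple) :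
    {x : ↥Xtriple | shiftSeq x.1 = y.1} = {shiftX y} := by
  ext x
  simp only [Set.mem_ofPred_eq, Set.mem_singleton_iff, shiftSeq_eq_iff x.2 y.2, Subtype.ext_iff]
  rfl

/-- Since `σ` is an involution of `X`, the map `T` of the paper is the restriction of this
operator. -/
def shiftDiff : (↥Xtriple → ℤ) →ₗ[ℤ] (↥Xtriple → ℤ) :=
  LinearMap.id - LinearMap.funLeft ℤ ℤ shiftX

lemma shiftDiff_apply (f : ↥Xtriple → ℤ) (y : ↥Xtriple) : shiftDiff f y = f y - f (shiftX y) :=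
  rfl

lemma shiftDiff_eq_zero_iff {f : ↥Xtriple → ℤ} : shiftDiff f = 0 ↔ ∀ y, f (shiftX y) = f y := by
  simp only [funext_iff, shiftDiff_apply, Pi.zero_apply, sub_eq_zero]
  exact forall_congr' fun _ => eq_comm

lemma shiftDiff_ind {S S' : Set (ℕ → ℕ)} (h : ∀ y : ↥Xtriple, shiftSeq y.1 ∈ S ↔ y.1 ∈ S') :
    shiftDiff (ind Xtriple S) = ind Xtriple S - ind Xtriple S' := by
  funext y
  have hy := h y
  simp only [shiftDiff_apply, Pi.sub_apply, ind, shiftX]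
  split_ifs <;> simp_all

lemma add_apply_shiftX_of_mem_range {g : ↥Xtriple → ℤ} (hg : g ∈ LinearMap.range shiftDiff)
    (y : ↥Xtriple) : g y + g (shiftX y) = 0 := by
  obtain ⟨f, rfl⟩ := hg
  simp only [shiftDiff_apply, shiftX, shiftSeq_shiftSeq y.2]
  ring

end Shift

section Kernel

noncomputable def orbitInd (j : ℕ) : ↥Xtriple → ℤ := ind Xtriple {alt0 j, alt1 j}

@[simp]
lemma orbitInd_alt1Pt (i j : ℕ) : orbitInd i (alt1Pt j) = if j = i then 1 else 0 := by
  simp only [orbitInd, ind, alt1Pt, Set.mem_insert_iff, Set.mem_singleton_iff, alt1_inj,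
    alt1_eq_alt0_iff]
  split_ifs <;> omega

lemma shiftDiff_orbitInd (j : ℕ) : shiftDiff (orbitInd j) = 0 := by
  rw [orbitInd, shiftDiff_ind (S' := {alt0 j, alt1 j}), sub_self]
  intro y
  simp only [Set.mem_insert_iff, Set.mem_singleton_iff, shiftSeq_eq_iff y.2 (alt0_mem j),
    shiftSeq_eq_iff y.2 (alt1_mem j), shiftSeq_alt0, shiftSeq_alt1, or_comm]

lemma orbitInd_zero : orbitInd 0 = ind Xtriple {fun _ => 0} := by
  rw [orbitInd, ← alt0_zero, show alt1 0 = alt0 0 from rfl, Set.pair_eq_singleton]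

lemma orbitInd_of_pos {j : ℕ} (hj : 1 ≤ j) :
    orbitInd j = ind Xtriple {alt0 j} + ind Xtriple {alt1 j} := by
  funext y
  have : ¬ (y.1 = alt0 j ∧ y.1 = alt1 j) := fun h => by
    have := h.1.symm.trans h.2
    simp at this
    omega
  by_cases h0 : y.1 = alt0 j <;> by_cases h1 : y.1 = alt1 j <;>
    simp_all [orbitInd, ind]

lemma range_orbitInd :
    Set.range orbitInd = {ind Xtriple {fun _ => 0}} ∪
      {g | ∃ j, 1 ≤ j ∧ g = ind Xtriple {alt0 j} + ind Xtriple {alt1 j}} := by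
  ext g
  constructor
  · rintro ⟨_ | j, rfl⟩
    · exact Or.inl orbitInd_zero
    · exact Or.inr ⟨j + 1, by omega, orbitInd_of_pos (by omega)⟩
  · rintro (rfl | ⟨j, hj, rfl⟩)
    · exact ⟨0, orbitInd_zero⟩
    · exact ⟨j, orbitInd_of_pos hj⟩

lemma linearCombination_orbitInd_alt1Pt (l : ℕ →₀ ℤ) (j : ℕ) :
    Finsupp.linearCombination ℤ orbitInd l (alt1Pt j) = l j := by
  induction l using Finsupp.induction_linear with
  | zero => simp
  | add l l' hl hl' => simp [hl, hl']
  | single i a => simp [Finsupp.single_apply, eq_comm]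

lemma linearIndependent_orbitInd : LinearIndependent ℤ orbitInd :=
  linearIndependent_iff.mpr fun l hl => Finsupp.ext fun j => by
    rw [← linearCombination_orbitInd_alt1Pt, hl]
    rfl

lemma exists_finsupp_of_mem_Vspan {f : ↥Xtriple → ℤ} (hf : f ∈ Vspan) :
    ∃ l : ℕ →₀ ℤ, ∀ j, f (alt1Pt j) = l j := by
  suffices Vspan ≤ (LinearMap.range Finsupp.lcoeFun).comap (LinearMap.funLeft ℤ ℤ alt1Pt) by
    obtain ⟨l, hl⟩ := this hf
    exact ⟨l, fun j => (congrFun hl j).symm⟩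
  refine Submodule.span_le.mpr ?_
  rintro _ (((rfl | rfl) | ⟨m, hm, rfl⟩) | ⟨m, -, rfl⟩)
  · exact ⟨Finsupp.single 0 1, by ext j; simp [ind, alt1Pt, Finsupp.single_apply, eq_comm]⟩
  · exact ⟨0, by ext j; simp [ind, alt1Pt]⟩
  · exact ⟨0, by ext j; simp [ind, alt1Pt]; omega⟩
  · exact ⟨Finsupp.single m 1, by ext j; simp [ind, alt1Pt, Finsupp.single_apply, eq_comm]⟩

lemma orbitInd_mem_Vspan (j : ℕ) : orbitInd j ∈ Vspan := by
  rcases Nat.eq_zero_or_pos j with rfl | hj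
  · rw [orbitInd_zero]
    exact Submodule.subset_span (Or.inl (Or.inl (Or.inl rfl)))
  · rw [orbitInd_of_pos hj]
    exact add_mem (Submodule.subset_span (Or.inl (Or.inr ⟨j, hj, rfl⟩)))
      (Submodule.subset_span (Or.inr ⟨j, hj, rfl⟩))

lemma span_orbitInd_le_Vspan : Submodule.span ℤ (Set.range orbitInd) ≤ Vspan :=
  Submodule.span_le.mpr (Set.range_subset_iff.mpr orbitInd_mem_Vspan)

lemma eq_of_shiftDiff_eq_zero {f g : ↥Xtriple → ℤ} (hf : shiftDiff f = 0) (hg : shiftDiff g = 0)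
    (h : ∀ j, f (alt1Pt j) = g (alt1Pt j)) : f = g := by
  rw [shiftDiff_eq_zero_iff] at hf hg
  funext y
  obtain ⟨j, rfl | rfl⟩ := exists_eq_alt0Pt_or_eq_alt1Pt y
  · rw [← shiftX_alt1Pt, hf, hg, h]
  · exact h j

theorem Vspan_inf_ker_shiftDiff :
    Vspan ⊓ LinearMap.ker shiftDiff = Submodule.span ℤ (Set.range orbitInd) := by
  have hker : Submodule.span ℤ (Set.range orbitInd) ≤ LinearMap.ker shiftDiff :=
    Submodule.span_le.mpr (Set.range_subset_iff.mpr shiftDiff_orbitInd)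
  refine le_antisymm ?_ (le_inf span_orbitInd_le_Vspan hker)
  rintro f ⟨hfV, hf⟩
  obtain ⟨l, hl⟩ := exists_finsupp_of_mem_Vspan hfV
  have hmem : Finsupp.linearCombination ℤ orbitInd l ∈ Submodule.span ℤ (Set.range orbitInd) := by
    rw [← Finsupp.range_linearCombination]
    exact ⟨l, rfl⟩
  convert hmem using 1
  exact eq_of_shiftDiff_eq_zero hf (hker hmem) fun j => by
    rw [linearCombination_orbitInd_alt1Pt, hl]

end Kernel

section Cokernel

/-- `cokerRep (j + 1)` is `χ_{B_j}`, and `χ_{A₀}` for `j = 0`. -/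
noncomputable def cokerRep : ℕ → ↥Xtriple → ℤ
  | 0 => ind Xtriple {y | ∃ j, 1 ≤ j ∧ y = alt0 j}
  | j + 1 => ind Xtriple {alt0 j}

lemma cokerRep_mem_Wspan : ∀ i, cokerRep i ∈ Wspan
  | 0 => Submodule.subset_span (Or.inl (Or.inl (Or.inr (Or.inl rfl))))
  | 1 => by
    rw [cokerRep, alt0_zero]
    exact Submodule.subset_span (Or.inl (Or.inl (Or.inl rfl)))
  | j + 2 => Submodule.subset_span (Or.inl (Or.inr ⟨j + 1, by omega, rfl⟩))

lemma linearCombination_cokerRep_alt0Pt (l : ℕ →₀ ℤ) (j : ℕ) :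
    Finsupp.linearCombination ℤ cokerRep l (alt0Pt j) =
      (if 1 ≤ j then l 0 else 0) + l (j + 1) := by
  induction l using Finsupp.induction_linear with
  | zero => simp
  | add l l' hl hl' =>
    simp only [map_add, Pi.add_apply, hl, hl', Finsupp.coe_add]
    split_ifs <;> ring
  | single i a =>
    rcases i with _ | i
    · simp [cokerRep, ind, alt0Pt]
    · simp [cokerRep, ind, alt0Pt, Finsupp.single_apply, eq_comm]

lemma linearCombination_cokerRep_alt1Pt (l : ℕ →₀ ℤ) (j : ℕ) :
    Finsupp.linearCombination ℤ cokerRep l (alt1Pt j) = if j = 0 then l 1 else 0 := by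
  induction l using Finsupp.induction_linear with
  | zero => simp
  | add l l' hl hl' =>
    simp only [map_add, Pi.add_apply, hl, hl', Finsupp.coe_add]
    split_ifs <;> ring
  | single i a =>
    rcases i with _ | i
    · simp [cokerRep, ind, alt1Pt]
    · simp [cokerRep, ind, alt1Pt, Finsupp.single_apply, ite_and]

/-- The orbit sums vanish; on the orbit of `(j0)^∞` with `j` beyond the support of `l`, this kills
the coefficient of `χ_{U'}`. -/
lemma eq_zero_of_linearCombination_cokerRep_mem_range {l : ℕ →₀ ℤ}
    (h : Finsupp.linearCombination ℤ cokerRep l ∈ LinearMap.range shiftDiff) : l = 0 := by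
  have horbit := fun j => add_apply_shiftX_of_mem_range h (alt1Pt j)
  simp only [shiftX_alt1Pt, linearCombination_cokerRep_alt0Pt,
    linearCombination_cokerRep_alt1Pt] at horbit
  obtain ⟨n, hn⟩ := l.support.exists_nat_subset_range
  have hfar : l (n + 2) = 0 := Finsupp.notMem_support_iff.mp fun h => by simpa using hn h
  have h0 : l 0 = 0 := by simpa [hfar] using horbit (n + 1)
  ext (_ | _ | j)
  · exact h0
  · simpa using horbit 0
  · simpa [h0] using horbit (j + 1)

lemma shiftDiff_ind_alt0 (j : ℕ) :
    shiftDiff (ind Xtriple {alt0 j}) = ind Xtriple {alt0 j} - ind Xtriple {alt1 j} :=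
  shiftDiff_ind fun y => by
    simp only [Set.mem_singleton_iff, shiftSeq_eq_iff y.2 (alt0_mem j), shiftSeq_alt0]

lemma shiftDiff_ind_range_alt0 :
    shiftDiff (ind Xtriple {y | ∃ j, 1 ≤ j ∧ y = alt0 j}) =
      ind Xtriple {y | ∃ j, 1 ≤ j ∧ y = alt0 j} - ind Xtriple {y | ∃ j, 1 ≤ j ∧ y = alt1 j} :=
  shiftDiff_ind fun y => by
    simp only [Set.mem_ofPred_eq, shiftSeq_eq_iff y.2 (alt0_mem _), shiftSeq_alt0]

end Cokernel

section Transfer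

variable {T : Vspan →ₗ[ℤ] Wspan}

lemma coe_apply_eq_shiftDiff
    (hT : ∀ (f : Vspan) (y : ↥Xtriple),
      (T f : ↥Xtriple → ℤ) y =
        (f : ↥Xtriple → ℤ) y -
          ∑ᶠ x ∈ {x : ↥Xtriple | shiftSeq x.1 = y.1}, (f : ↥Xtriple → ℤ) x)
    (f : Vspan) : (T f : ↥Xtriple → ℤ) = shiftDiff f := by
  funext y
  rw [hT, preimage_shiftSeq, finsum_mem_singleton, shiftDiff_apply]

lemma apply_eq_zero_iff_mem_span_orbitInd
    (hT : ∀ f : Vspan, (T f : ↥Xtriple → ℤ) = shiftDiff f) (f : Vspan) :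
    T f = 0 ↔ (f : ↥Xtriple → ℤ) ∈ Submodule.span ℤ (Set.range orbitInd) := by
  rw [← Vspan_inf_ker_shiftDiff, Submodule.mem_inf, LinearMap.mem_ker, ← hT,
    ZeroMemClass.coe_eq_zero]
  exact (and_iff_right f.2).symm

lemma map_ker_eq_span_orbitInd (hT : ∀ f : Vspan, (T f : ↥Xtriple → ℤ) = shiftDiff f) :
    (LinearMap.ker T).map Vspan.subtype = Submodule.span ℤ (Set.range orbitInd) := by
  ext g
  constructor
  · rintro ⟨f, hf, rfl⟩
    exact (apply_eq_zero_iff_mem_span_orbitInd hT f).mp hf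
  · intro hg
    exact ⟨⟨g, span_orbitInd_le_Vspan hg⟩,
      (apply_eq_zero_iff_mem_span_orbitInd hT _).mpr hg, rfl⟩

variable (T) in
noncomputable def cokerClass (i : ℕ) : Wspan ⧸ LinearMap.range T :=
  Submodule.Quotient.mk ⟨cokerRep i, cokerRep_mem_Wspan i⟩

lemma linearIndependent_cokerClass (hT : ∀ f : Vspan, (T f : ↥Xtriple → ℤ) = shiftDiff f) :
    LinearIndependent ℤ (cokerClass T) := by
  refine linearIndependent_iff.mpr fun l hl => eq_zero_of_linearCombination_cokerRep_mem_range ?_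
  let rep : ℕ → Wspan := fun i => ⟨cokerRep i, cokerRep_mem_Wspan i⟩
  have hclass : cokerClass T = (LinearMap.range T).mkQ ∘ rep := rfl
  rw [hclass, ← Finsupp.apply_linearCombination, Submodule.mkQ_apply,
    Submodule.Quotient.mk_eq_zero] at hl
  obtain ⟨f, hf⟩ := hl
  refine ⟨f, ?_⟩
  rw [← hT, hf, ← Submodule.subtype_apply, Finsupp.apply_linearCombination]
  rfl

lemma mk_eq_mk_of_shiftDiff_eq (hT : ∀ f : Vspan, (T f : ↥Xtriple → ℤ) = shiftDiff f)
    {a b : Wspan} {g : ↥Xtriple → ℤ} (hg : g ∈ Vspan) (h : shiftDiff g = a - b) :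
    (Submodule.Quotient.mk a : Wspan ⧸ LinearMap.range T) = Submodule.Quotient.mk b :=
  (Submodule.Quotient.eq _).mpr ⟨⟨g, hg⟩, Subtype.ext (by rw [hT]; exact h)⟩

lemma span_cokerClass_eq_top (hT : ∀ f : Vspan, (T f : ↥Xtriple → ℤ) = shiftDiff f) :
    Submodule.span ℤ (Set.range (cokerClass T)) = ⊤ := by
  have hle : (⊤ : Submodule ℤ Wspan) ≤
      (Submodule.span ℤ (Set.range (cokerClass T))).comap (LinearMap.range T).mkQ := by
    refine (Submodule.span_span_coe_preimage (R := ℤ)).ge.trans (Submodule.span_le.mpr ?_)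
    rintro ⟨s, hsW⟩ hs
    change Submodule.Quotient.mk (⟨s, hsW⟩ : Wspan) ∈ Submodule.span ℤ (Set.range (cokerClass T))
    rcases hs with ((rfl | rfl | rfl) | ⟨m, hm, rfl⟩) | ⟨m, hm, rfl⟩
    · exact Submodule.subset_span ⟨1, by simp only [cokerClass, cokerRep, alt0_zero]⟩
    · exact Submodule.subset_span ⟨0, rfl⟩
    · rw [← mk_eq_mk_of_shiftDiff_eq hT (a := ⟨_, cokerRep_mem_Wspan 0⟩) (b := ⟨_, hsW⟩)
        (Submodule.subset_span (Or.inl (Or.inl (Or.inr rfl)))) shiftDiff_ind_range_alt0]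
      exact Submodule.subset_span ⟨0, rfl⟩
    · exact Submodule.subset_span ⟨m + 1, rfl⟩
    · rw [← mk_eq_mk_of_shiftDiff_eq hT (a := ⟨_, cokerRep_mem_Wspan (m + 1)⟩) (b := ⟨_, hsW⟩)
        (Submodule.subset_span (Or.inl (Or.inr ⟨m, hm, rfl⟩))) (shiftDiff_ind_alt0 m)]
      exact Submodule.subset_span ⟨m + 1, rfl⟩
  rw [eq_top_iff]
  rintro q -
  obtain ⟨w, rfl⟩ := Submodule.mkQ_surjective _ q
  exact hle trivial

end Transfer

/-- for the 2-step subshift `X` above and the map `T : V → W`,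
`T(f)(y) = f(y) − ∑_{σ(x) = y} f(x)`, the kernel of `T` is the ℤ-span of
`{χ_{A₀}} ∪ {χ_{B_j} + χ_{C_j} : j ≥ 1}`, which is isomorphic to `⊕_{j∈ℕ} ℤ`, and the
cokernel `W / T(V)` is isomorphic to `⊕_{j∈ℕ} ℤ`. -/
theorem stmt18 (T : Vspan →ₗ[ℤ] Wspan)
    (hT : ∀ (f : Vspan) (y : ↥Xtriple),
      (T f : ↥Xtriple → ℤ) y =
        (f : ↥Xtriple → ℤ) y -
          ∑ᶠ x ∈ {x : ↥Xtriple | shiftSeq x.1 = y.1}, (f : ↥Xtriple → ℤ) x) :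
    (∀ f : Vspan, T f = 0 ↔
      (f : ↥Xtriple → ℤ) ∈ Submodule.span ℤ
        ({ind Xtriple {fun _ => 0}} ∪
          {g | ∃ j, 1 ≤ j ∧ g = ind Xtriple {alt0 j} + ind Xtriple {alt1 j}})) ∧
    Nonempty (LinearMap.ker T ≃ₗ[ℤ] (ℕ →₀ ℤ)) ∧
    Nonempty ((↥Wspan ⧸ LinearMap.range T) ≃ₗ[ℤ] (ℕ →₀ ℤ)) := by
  have hT' := coe_apply_eq_shiftDiff hT
  refine ⟨fun f => by rw [apply_eq_zero_iff_mem_span_orbitInd hT', range_orbitInd], ⟨?_⟩,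
    ⟨?_⟩⟩
  · exact (Submodule.equivMapOfInjective _ Subtype.val_injective _).trans <|
      (LinearEquiv.ofEq _ _ (map_ker_eq_span_orbitInd hT')).trans
        (Module.Basis.span linearIndependent_orbitInd).repr
  · exact (Module.Basis.mk (linearIndependent_cokerClass hT') (span_cokerClass_eq_top hT').ge).repr

end SubshiftPaper
end
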